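/- arXiv:2603.25138 — 8 statements merged into one kernel-verified Lean document; each statement's English description precedes it below -/
import Mathlib

section
/- Let S ≥ 1, let O be a finite outcome set and 𝒜 a set of actions. Suppose given: ρ₁ ∈ M_S with Tr(ρ₁) = 1; for each step j ≥ 1 a ℂ-linear trace-preserving map E_j : M_S → M_S; for each action a an instrument {Φ^a_o}_{o∈O} on M_S; and for each action a a recovery family {R^a_o}_{o∈O} for that instrument. Define the initial observable vector v₀(a₁) ∈ (O → ℂ) by v₀(a₁)(o) := Tr(Φ^{a₁}_o(ρ₁)), and for each step j the OOM superoperator A_j(o,a,a') : (O → ℂ) → (O → ℂ) by (A_j(o,a,a')v)(o') := Tr(Φ^{a'}_{o'}(E_j(R^a_o(v)))). Fix l ≥ 1 and a trajectory τ_l = (a₁,o₁,…,a_l,o_l), define the subnormalized filtered states ρ̃₁ := ρ₁ and ρ̃_{j+1} := E_j(Φ^{a_j}_{o_j}(ρ̃_j)) for 1 ≤ j ≤ l−1, and assume Tr(ρ̃_j) ≠ 0 for all 1 ≤ j ≤ l. Then the prefix likelihood ∏_{j=1}^{l} [Tr(Φ^{a_j}_{o_j}(ρ̃_j)) / Tr(ρ̃_j)]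 equals the o_l-th entry of (A_{l−1}(o_{l−1},a_{l−1},a_l) ∘ ⋯ ∘ A_1(o_1,a_1,a_2))(v₀(a₁)); in particular, for l = 1 it equals v₀(a₁)(o₁). -/
open Matrix BigOperators

/-- **Trajectory probabilities via observable operators** (paper's Lemma 3.1).
Let `S ≥ 1`, `O` a finite outcome set and `𝒜` a set of actions.  Given an initial memory
state `ρ₁` with `Tr(ρ₁) = 1`, trace-preserving ℂ-linear memory channels `E j` (for `j ≥ 1`),
for each action `a` an instrument `{Φ a o}_{o ∈ O}` (`Σ_o Tr(Φ a o X) = Tr(X)`), and a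
recovery family `{R a o}_{o ∈ O}` for it (`R a o (o' ↦ Tr(Φ a o' X)) = Φ a o X`), define the
initial observable vector `v₀(a₁)(o) = Tr(Φ a₁ o ρ₁)` (here `w 1`) and the OOM
superoperators `(A_j(o,a,a') v)(o') = Tr(Φ a' o' (E j (R a o v)))` (folded into the
recursion for `w`).  Fix a trajectory `(a 1, o 1, …, a l, o l)` with `l ≥ 1`, let
`ρt 1 = ρ₁`, `ρt (j+1) = E j (Φ (a j) (o j) (ρt j))` be the subnormalized filtered states,
and suppose `Tr(ρt j) ≠ 0` for `1 ≤ j ≤ l`.  Then the prefix likelihood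
`Π_{j=1}^l Tr(Φ (a j) (o j) (ρt j)) / Tr(ρt j)` equals the `o l`-entry of
`(A_{l-1} ∘ ⋯ ∘ A_1)(v₀(a 1))`, i.e. of `w l`; in particular for `l = 1` it is
`v₀(a 1)(o 1) = w 1 (o 1)`. -/
theorem stmt0
    {S : ℕ} (hS : 1 ≤ S) {O 𝒜 : Type*} [Fintype O]
    (ρ₁ : Matrix (Fin S) (Fin S) ℂ) (hρ₁ : ρ₁.trace = 1)
    (E : ℕ → Matrix (Fin S) (Fin S) ℂ →ₗ[ℂ] Matrix (Fin S) (Fin S) ℂ)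
    (hE : ∀ j, 1 ≤ j → ∀ X, (E j X).trace = X.trace)
    (Φ : 𝒜 → O → Matrix (Fin S) (Fin S) ℂ →ₗ[ℂ] Matrix (Fin S) (Fin S) ℂ)
    (hΦ : ∀ a X, ∑ o : O, (Φ a o X).trace = X.trace)
    (R : 𝒜 → O → (O → ℂ) →ₗ[ℂ] Matrix (Fin S) (Fin S) ℂ)
    (hR : ∀ a o X, R a o (fun o' => (Φ a o' X).trace) = Φ a o X)
    (l : ℕ) (hl : 1 ≤ l) (a : ℕ → 𝒜) (o : ℕ → O)
    -- the subnormalized filtered states along the trajectory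
    (ρt : ℕ → Matrix (Fin S) (Fin S) ℂ)
    (hρt1 : ρt 1 = ρ₁)
    (hρtsucc : ∀ j, 1 ≤ j → j ≤ l - 1 → ρt (j + 1) = E j (Φ (a j) (o j) (ρt j)))
    (hnz : ∀ j, 1 ≤ j → j ≤ l → (ρt j).trace ≠ 0)
    -- the OOM iterates: `w 1` is the initial observable vector `v₀ (a 1)`, and
    -- `w (j+1) = A_j(o j, a j, a (j+1)) (w j)`
    (w : ℕ → O → ℂ)
    (hw1 : w 1 = fun o' => (Φ (a 1) o' ρ₁).trace)
    (hwsucc : ∀ j, 1 ≤ j → j ≤ l - 1 →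
      w (j + 1) = fun o' => (Φ (a (j + 1)) o' (E j (R (a j) (o j) (w j)))).trace) :
    (∏ j ∈ Finset.Icc 1 l, (Φ (a j) (o j) (ρt j)).trace / (ρt j).trace) = w l (o l) := by
  -- `w j` is the observable vector of the filtered state `ρt j`
  have key : ∀ j, 1 ≤ j → j ≤ l → w j = fun o' => (Φ (a j) o' (ρt j)).trace := by
    intro j hj
    induction j, hj using Nat.le_induction with
    | base => intro _; rw [hw1, hρt1]
    | succ m hm ih =>
      intro hml
      have hm' : m ≤ l - 1 := by omega
      have hml' : m ≤ l := by omega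
      rw [hwsucc m hm hm', ih hml', hR, ← hρtsucc m hm hm']
  have trρ1 : (ρt 1).trace = 1 := by rw [hρt1, hρ₁]
  -- telescoping product
  have prod : ∀ m, 1 ≤ m → m ≤ l →
      (∏ j ∈ Finset.Icc 1 m, (Φ (a j) (o j) (ρt j)).trace / (ρt j).trace)
        = (Φ (a m) (o m) (ρt m)).trace / (ρt 1).trace := by
    intro m hm
    induction m, hm using Nat.le_induction with
    | base => intro _; simp
    | succ m hm ih =>
      intro hml
      have hm' : m ≤ l - 1 := by omega
      have hml' : m ≤ l := by omega
      have htr : (ρt (m + 1)).trace = (Φ (a m) (o m) (ρt m)).trace := by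
        rw [hρtsucc m hm hm', hE m hm]
      rw [Finset.prod_Icc_succ_top (by omega : 1 ≤ m + 1), ih hml']
      rw [htr]
      have hne : (Φ (a m) (o m) (ρt m)).trace ≠ 0 := by
        rw [← htr]; exact hnz (m + 1) (by omega) hml
      field_simp
  rw [prod l hl le_rfl, key l hl le_rfl, trρ1, div_one]
end

section
/- Let β > 0, p₀ ∈ (1/2, 1), p₁ := 1 − p₀, and i ∈ {0,1}. For each integer M ≥ 1 set δp := (p₀ − 1/2)/M and ν_M(l) := β⁻¹ · log((p₀ − l·δp)/(p₁ + l·δp)) for 0 ≤ l ≤ M, and define the expected extracted work E_M := −i·ν_M(1) + Σ_{l=1}^{M−1} (p₁ + l·δp)·(ν_M(l) − ν_M(l+1)). Then, as M → ∞, E_M converges to w_i := β⁻¹·(log 2 + log p_i), where p_i = p₀ if i = 0 and p_i = p₁ if i = 1. -/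
open BigOperators

open Real Filter Set

lemma slope_key {a x y : ℝ} (ha : 0 < a) (hx : a ≤ x) (hxy : x ≤ y) (hy : y ≤ 1/2) :
    x * ((Real.log (1-x) - Real.log x) - (Real.log (1-y) - Real.log y)) ≤
      Real.log (1-x) - Real.log (1-y) ∧
    Real.log (1-x) - Real.log (1-y) ≤
      x * ((Real.log (1-x) - Real.log x) - (Real.log (1-y) - Real.log y)) + 2/a * (y-x)^2 := by
  rcases eq_or_lt_of_le hxy with rfl | hlt
  · norm_num
  · set W : ℝ → ℝ := fun q => x * (Real.log (1-q) - Real.log q) - Real.log (1-q) with hW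
    have hmem : ∀ q ∈ Set.Icc x y, 0 < q ∧ q < 1 := by
      rintro q ⟨h1, h2⟩
      constructor <;> nlinarith
    have hderiv : ∀ q ∈ Set.Icc x y, HasDerivAt W ((q - x)/(q*(1-q))) q := by
      intro q hq
      obtain ⟨hq0, hq1⟩ := hmem q hq
      have h1 : HasDerivAt (fun q : ℝ => 1 - q) (-1) q := by
        simpa using (hasDerivAt_id q).const_sub 1
      have hl1 : HasDerivAt (fun q : ℝ => Real.log (1-q)) (-1/(1-q)) q :=
        h1.log (by linarith)
      have hl2 : HasDerivAt Real.log q⁻¹ q := Real.hasDerivAt_log (ne_of_gt hq0)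
      have h := ((hl1.sub hl2).const_mul x).sub hl1
      refine h.congr_deriv ?_
      have hq1' : (1:ℝ) - q ≠ 0 := sub_ne_zero.2 (ne_of_gt (by linarith))
      field_simp
      ring
    have hcont : ContinuousOn W (Set.Icc x y) :=
      fun q hq => ((hderiv q hq).continuousAt).continuousWithinAt
    obtain ⟨c, hc, hsl⟩ := exists_hasDerivAt_eq_slope W _ hlt hcont
      (fun q hq => hderiv q (Set.mem_Icc_of_Ioo hq))
    have hcx : x < c := hc.1
    have hcy : c < y := hc.2
    have hc0 : 0 < c := by linarith
    have hc1 : c < 1 := by linarith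
    have hyx : y - x ≠ 0 := sub_ne_zero.2 hlt.ne'
    have hWeq : W y - W x = (c-x)/(c*(1-c)) * (y-x) := by
      rw [hsl, div_mul_cancel₀ _ hyx]
    have hb0 : 0 ≤ (c-x)/(c*(1-c)) := div_nonneg (by linarith) (by nlinarith)
    have hb1 : (c-x)/(c*(1-c)) ≤ 2/a * (y-x) := by
      calc (c-x)/(c*(1-c)) ≤ (y-x)/(a/2) := by
            apply div_le_div₀ (by linarith) (by linarith) (by positivity) (by nlinarith)
        _ = 2/a * (y-x) := by field_simp
    have key : Real.log (1-x) - Real.log (1-y)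
        - x * ((Real.log (1-x) - Real.log x) - (Real.log (1-y) - Real.log y))
        = (c-x)/(c*(1-c)) * (y-x) := by
      rw [← hWeq]; simp only [hW]; ring
    constructor
    · have := mul_nonneg hb0 (by linarith : (0:ℝ) ≤ y - x)
      linarith
    · have h2 := mul_le_mul_of_nonneg_right hb1 (by linarith : (0:ℝ) ≤ y - x)
      have e : 2/a*(y-x)*(y-x) = 2/a*(y-x)^2 := by ring
      linarith

lemma tel_sum (G : ℕ → ℝ) : ∀ n : ℕ, ∑ l ∈ Finset.Icc 1 n, (G l - G (l+1)) = G 1 - G (n+1) := by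
  intro n
  induction n with
  | zero => simp
  | succ n ih => rw [Finset.sum_Icc_succ_top (by omega), ih]; ring

lemma sum_bounds (β p₀ : ℝ) (hβ : 0 < β) (hp₀ : 1/2 < p₀) (hp₀' : p₀ < 1)
    (M : ℕ) (hM : 1 ≤ M) (D : ℝ) (hD : D = (p₀ - 1/2)/(M:ℝ)) :
    β⁻¹*(Real.log (p₀ - D) + Real.log 2) - β⁻¹*(2/(1-p₀))*((p₀-1/2)^2/(M:ℝ))
      ≤ (∑ l ∈ Finset.Icc 1 (M-1), ((1-p₀) + (l:ℝ)*D) *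
          ((β⁻¹ * Real.log ((p₀ - (l:ℝ)*D)/((1-p₀)+(l:ℝ)*D)))
           - (β⁻¹ * Real.log ((p₀ - ((l+1 : ℕ):ℝ)*D)/((1-p₀)+((l+1 : ℕ):ℝ)*D)))))
    ∧ (∑ l ∈ Finset.Icc 1 (M-1), ((1-p₀) + (l:ℝ)*D) *
          ((β⁻¹ * Real.log ((p₀ - (l:ℝ)*D)/((1-p₀)+(l:ℝ)*D)))
           - (β⁻¹ * Real.log ((p₀ - ((l+1 : ℕ):ℝ)*D)/((1-p₀)+((l+1 : ℕ):ℝ)*D)))))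
      ≤ β⁻¹*(Real.log (p₀ - D) + Real.log 2) := by
  have hp₁ : (0:ℝ) < 1 - p₀ := by linarith
  have hβi : (0:ℝ) ≤ β⁻¹ := le_of_lt (inv_pos.2 hβ)
  have hMR : (0:ℝ) < M := by exact_mod_cast hM
  have hD0 : 0 ≤ D := by rw [hD]; exact div_nonneg (by linarith) (le_of_lt hMR)
  have hMD : (M:ℝ) * D = p₀ - 1/2 := by rw [hD]; field_simp
  have hle : ∀ l : ℕ, l ≤ M → (1-p₀) + (l:ℝ)*D ≤ 1/2 := by
    intro l h
    have h1 : (l:ℝ)*D ≤ (M:ℝ)*D :=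
      mul_le_mul_of_nonneg_right (by exact_mod_cast h) hD0
    rw [hMD] at h1
    linarith
  have hpos : ∀ l : ℕ, 0 < (1-p₀) + (l:ℝ)*D := by
    intro l
    have := mul_nonneg (Nat.cast_nonneg l : (0:ℝ) ≤ l) hD0
    linarith
  -- rewrite the sum
  have hcongr : ∀ l ∈ Finset.Icc 1 (M-1),
      ((1-p₀) + (l:ℝ)*D) *
          ((β⁻¹ * Real.log ((p₀ - (l:ℝ)*D)/((1-p₀)+(l:ℝ)*D)))
           - (β⁻¹ * Real.log ((p₀ - ((l+1 : ℕ):ℝ)*D)/((1-p₀)+((l+1 : ℕ):ℝ)*D))))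
      = β⁻¹ * (((1-p₀)+(l:ℝ)*D) *
          ((Real.log (1 - ((1-p₀)+(l:ℝ)*D)) - Real.log ((1-p₀)+(l:ℝ)*D))
           - (Real.log (1 - ((1-p₀)+((l+1 : ℕ):ℝ)*D)) - Real.log ((1-p₀)+((l+1 : ℕ):ℝ)*D)))) := by
    intro l hl
    rw [Finset.mem_Icc] at hl
    have hlM : l + 1 ≤ M := by omega
    have hx1 : (1-p₀) + (l:ℝ)*D ≤ 1/2 := hle l (by omega)
    have hy1 : (1-p₀) + ((l+1 : ℕ):ℝ)*D ≤ 1/2 := hle (l+1) hlM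
    have e1 : (1:ℝ) - ((1-p₀)+(l:ℝ)*D) = p₀ - (l:ℝ)*D := by ring
    have e2 : (1:ℝ) - ((1-p₀)+((l+1 : ℕ):ℝ)*D) = p₀ - ((l+1 : ℕ):ℝ)*D := by ring
    rw [e1, e2, Real.log_div (by linarith [hx1] : p₀ - (l:ℝ)*D ≠ 0) (ne_of_gt (hpos l)),
      Real.log_div (by linarith [hy1] : p₀ - ((l+1 : ℕ):ℝ)*D ≠ 0) (ne_of_gt (hpos (l+1)))]
    ring
  -- telescoping
  have htel : ∑ l ∈ Finset.Icc 1 (M-1),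
      (Real.log (1 - ((1-p₀)+(l:ℝ)*D)) - Real.log (1 - ((1-p₀)+((l+1 : ℕ):ℝ)*D)))
      = Real.log (1 - ((1-p₀)+((1:ℕ):ℝ)*D)) - Real.log (1 - ((1-p₀)+((M:ℕ):ℝ)*D)) := by
    have h := tel_sum (fun l : ℕ => Real.log (1 - ((1-p₀)+(l:ℝ)*D))) (M-1)
    rw [Nat.sub_add_cancel hM] at h
    simpa using h
  have hG1 : Real.log (1 - ((1-p₀)+((1:ℕ):ℝ)*D)) = Real.log (p₀ - D) := by
    rw [show (1:ℝ) - ((1-p₀)+((1:ℕ):ℝ)*D) = p₀ - D by push_cast; ring]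
  have hGM : Real.log (1 - ((1-p₀)+((M:ℕ):ℝ)*D)) = - Real.log 2 := by
    rw [show (1:ℝ) - ((1-p₀)+((M:ℕ):ℝ)*D) = 1/2 by rw [hMD]; ring, one_div, Real.log_inv]
  -- per-term bounds
  have hterm : ∀ l ∈ Finset.Icc 1 (M-1),
      (β⁻¹ * (Real.log (1 - ((1-p₀)+(l:ℝ)*D)) - Real.log (1 - ((1-p₀)+((l+1 : ℕ):ℝ)*D)))
          - β⁻¹ * (2/(1-p₀)*D^2)
        ≤ β⁻¹ * (((1-p₀)+(l:ℝ)*D) *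
          ((Real.log (1 - ((1-p₀)+(l:ℝ)*D)) - Real.log ((1-p₀)+(l:ℝ)*D))
           - (Real.log (1 - ((1-p₀)+((l+1 : ℕ):ℝ)*D)) - Real.log ((1-p₀)+((l+1 : ℕ):ℝ)*D)))))
      ∧ (β⁻¹ * (((1-p₀)+(l:ℝ)*D) *
          ((Real.log (1 - ((1-p₀)+(l:ℝ)*D)) - Real.log ((1-p₀)+(l:ℝ)*D))
           - (Real.log (1 - ((1-p₀)+((l+1 : ℕ):ℝ)*D)) - Real.log ((1-p₀)+((l+1 : ℕ):ℝ)*D))))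
        ≤ β⁻¹ * (Real.log (1 - ((1-p₀)+(l:ℝ)*D)) - Real.log (1 - ((1-p₀)+((l+1 : ℕ):ℝ)*D)))) := by
    intro l hl
    rw [Finset.mem_Icc] at hl
    have hlM : l + 1 ≤ M := by omega
    have hx : (1:ℝ) - p₀ ≤ (1-p₀)+(l:ℝ)*D := by
      have := mul_nonneg (Nat.cast_nonneg l : (0:ℝ) ≤ l) hD0; linarith
    have hxy : (1-p₀)+(l:ℝ)*D ≤ (1-p₀)+((l+1 : ℕ):ℝ)*D := by
      have : ((l:ℝ))*D ≤ ((l+1 : ℕ):ℝ)*D := by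
        apply mul_le_mul_of_nonneg_right _ hD0
        push_cast; linarith
      linarith
    have hy : (1-p₀)+((l+1 : ℕ):ℝ)*D ≤ 1/2 := hle (l+1) hlM
    have sk := slope_key hp₁ hx hxy hy
    have hyx : (1-p₀)+((l+1 : ℕ):ℝ)*D - ((1-p₀)+(l:ℝ)*D) = D := by push_cast; ring
    rw [hyx] at sk
    constructor
    · have m2 := mul_le_mul_of_nonneg_left sk.2 hβi
      rw [mul_add] at m2
      linarith
    · exact mul_le_mul_of_nonneg_left sk.1 hβi
  rw [Finset.sum_congr rfl hcongr]
  constructor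
  · have hlow : ∑ l ∈ Finset.Icc 1 (M-1),
        (β⁻¹ * (Real.log (1 - ((1-p₀)+(l:ℝ)*D)) - Real.log (1 - ((1-p₀)+((l+1 : ℕ):ℝ)*D)))
          - β⁻¹ * (2/(1-p₀)*D^2))
        ≤ ∑ l ∈ Finset.Icc 1 (M-1), β⁻¹ * (((1-p₀)+(l:ℝ)*D) *
          ((Real.log (1 - ((1-p₀)+(l:ℝ)*D)) - Real.log ((1-p₀)+(l:ℝ)*D))
           - (Real.log (1 - ((1-p₀)+((l+1 : ℕ):ℝ)*D)) - Real.log ((1-p₀)+((l+1 : ℕ):ℝ)*D)))) :=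
      Finset.sum_le_sum (fun l hl => (hterm l hl).1)
    have heq : ∑ l ∈ Finset.Icc 1 (M-1),
        (β⁻¹ * (Real.log (1 - ((1-p₀)+(l:ℝ)*D)) - Real.log (1 - ((1-p₀)+((l+1 : ℕ):ℝ)*D)))
          - β⁻¹ * (2/(1-p₀)*D^2))
        = β⁻¹ * (Real.log (p₀ - D) + Real.log 2)
          - ((M-1 : ℕ):ℝ) * (β⁻¹ * (2/(1-p₀)*D^2)) := by
      rw [Finset.sum_sub_distrib, ← Finset.mul_sum, htel, hG1, hGM, Finset.sum_const,
        Nat.card_Icc, nsmul_eq_mul]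
      push_cast
      ring_nf
    have hbound : ((M-1 : ℕ):ℝ) * (β⁻¹ * (2/(1-p₀)*D^2))
        ≤ β⁻¹*(2/(1-p₀))*((p₀-1/2)^2/(M:ℝ)) := by
      have h1 : ((M-1 : ℕ):ℝ) ≤ (M:ℝ) := by exact_mod_cast Nat.sub_le M 1
      have hc2 : 0 ≤ β⁻¹ * (2/(1-p₀)*D^2) := by positivity
      have h3 : ((M-1 : ℕ):ℝ) * (β⁻¹ * (2/(1-p₀)*D^2)) ≤ (M:ℝ) * (β⁻¹ * (2/(1-p₀)*D^2)) :=
        mul_le_mul_of_nonneg_right h1 hc2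
      have h2 : (M:ℝ)*D^2 = (p₀-1/2)^2/(M:ℝ) := by
        rw [hD]; field_simp
      calc ((M-1 : ℕ):ℝ) * (β⁻¹ * (2/(1-p₀)*D^2)) ≤ (M:ℝ) * (β⁻¹ * (2/(1-p₀)*D^2)) := h3
        _ = β⁻¹*(2/(1-p₀))*((p₀-1/2)^2/(M:ℝ)) := by rw [← h2]; ring
    linarith
  · have hup : ∑ l ∈ Finset.Icc 1 (M-1), β⁻¹ * (((1-p₀)+(l:ℝ)*D) *
          ((Real.log (1 - ((1-p₀)+(l:ℝ)*D)) - Real.log ((1-p₀)+(l:ℝ)*D))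
           - (Real.log (1 - ((1-p₀)+((l+1 : ℕ):ℝ)*D)) - Real.log ((1-p₀)+((l+1 : ℕ):ℝ)*D))))
        ≤ ∑ l ∈ Finset.Icc 1 (M-1),
          β⁻¹ * (Real.log (1 - ((1-p₀)+(l:ℝ)*D)) - Real.log (1 - ((1-p₀)+((l+1 : ℕ):ℝ)*D))) :=
      Finset.sum_le_sum (fun l hl => (hterm l hl).2)
    have heq : ∑ l ∈ Finset.Icc 1 (M-1),
        β⁻¹ * (Real.log (1 - ((1-p₀)+(l:ℝ)*D)) - Real.log (1 - ((1-p₀)+((l+1 : ℕ):ℝ)*D)))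
        = β⁻¹ * (Real.log (p₀ - D) + Real.log 2) := by
      rw [← Finset.mul_sum, htel, hG1, hGM]
      ring
    linarith

/-- **Convergence of the expected extracted work** (expectation part of the paper's
Theorem 9.1).  Let `β > 0`, `p₀ ∈ (1/2, 1)`, `p₁ = 1 - p₀`, `i ∈ {0,1}`.  For each `M ≥ 1`
set `δp = (p₀ - 1/2)/M`, `ν_M(l) = β⁻¹ log((p₀ - l δp)/(p₁ + l δp))`, and
`E_M = -i ν_M(1) + Σ_{l=1}^{M-1} (p₁ + l δp)(ν_M(l) - ν_M(l+1))`.  Then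
`E_M → w_i = β⁻¹ (log 2 + log p_i)` as `M → ∞`. -/
theorem stmt2 (β p₀ : ℝ) (hβ : 0 < β) (hp₀ : 1 / 2 < p₀) (hp₀' : p₀ < 1) (i : Fin 2) :
    Filter.Tendsto
      (fun M : ℕ =>
        let p₁ : ℝ := 1 - p₀
        let δp : ℝ := (p₀ - 1 / 2) / M
        let ν : ℕ → ℝ := (fun l => β⁻¹ * Real.log ((p₀ - l * δp) / (p₁ + l * δp)))
        (-((i : ℕ) : ℝ) * ν 1
          + ∑ l ∈ Finset.Icc 1 (M - 1), (p₁ + l * δp) * (ν l - ν (l + 1))))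
      Filter.atTop
      (nhds (β⁻¹ * (Real.log 2 + Real.log (if i = 0 then p₀ else 1 - p₀)))) := by
  have hp₁ : (0:ℝ) < 1 - p₀ := by linarith
  have hp0pos : (0:ℝ) < p₀ := by linarith
  have hβi : (0:ℝ) ≤ β⁻¹ := le_of_lt (inv_pos.2 hβ)
  set d : ℕ → ℝ := fun M => (p₀ - 1/2)/M with hd_def
  have hfun : (fun M : ℕ =>
        let p₁ : ℝ := 1 - p₀
        let δp : ℝ := (p₀ - 1 / 2) / M
        let ν : ℕ → ℝ := (fun l => β⁻¹ * Real.log ((p₀ - l * δp) / (p₁ + l * δp)))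
        (-((i : ℕ) : ℝ) * ν 1
          + ∑ l ∈ Finset.Icc 1 (M - 1), (p₁ + l * δp) * (ν l - ν (l + 1))))
      = fun M : ℕ =>
        (-((i : ℕ) : ℝ) * (β⁻¹ * Real.log ((p₀ - ((1:ℕ):ℝ) * d M) / ((1 - p₀) + ((1:ℕ):ℝ) * d M)))
          + ∑ l ∈ Finset.Icc 1 (M - 1), ((1 - p₀) + (l:ℝ) * d M) *
              ((β⁻¹ * Real.log ((p₀ - (l:ℝ) * d M) / ((1 - p₀) + (l:ℝ) * d M)))
               - (β⁻¹ * Real.log ((p₀ - ((l+1 : ℕ):ℝ) * d M) / ((1 - p₀) + ((l+1 : ℕ):ℝ) * d M))))) := rfl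
  rw [hfun]
  have hT : β⁻¹ * (Real.log 2 + Real.log (if i = 0 then p₀ else 1 - p₀))
      = -((i:ℕ):ℝ) * (β⁻¹ * Real.log (p₀ / (1 - p₀))) + β⁻¹ * (Real.log p₀ + Real.log 2) := by
    fin_cases i
    · simp only [Fin.val_zero, Nat.cast_zero, neg_zero, zero_mul, zero_add]
      rw [if_pos (by decide)]
      ring
    · simp only [Fin.val_one, Nat.cast_one, Fin.isValue]
      rw [if_neg (by decide), Real.log_div (ne_of_gt hp0pos) (ne_of_gt hp₁)]
      ring
  rw [hT]
  have hd0 : Filter.Tendsto d Filter.atTop (nhds 0) := tendsto_const_div_atTop_nhds_zero_nat _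
  refine Filter.Tendsto.add ?_ ?_
  · -- first summand
    have hnum : Filter.Tendsto (fun M => p₀ - ((1:ℕ):ℝ) * d M) Filter.atTop (nhds p₀) := by
      simpa using tendsto_const_nhds.sub hd0
    have hden : Filter.Tendsto (fun M => (1 - p₀) + ((1:ℕ):ℝ) * d M) Filter.atTop (nhds (1 - p₀)) := by
      simpa using tendsto_const_nhds.add hd0
    have hrat := hnum.div hden (ne_of_gt hp₁)
    exact ((hrat.log (by positivity)).const_mul β⁻¹).const_mul (-((i:ℕ):ℝ))
  · -- the sum: squeeze
    have hppd : Filter.Tendsto (fun M => p₀ - d M) Filter.atTop (nhds p₀) := by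
      simpa using tendsto_const_nhds.sub hd0
    have hsq : Filter.Tendsto (fun M : ℕ => (p₀ - 1/2)^2/(M:ℝ)) Filter.atTop (nhds 0) :=
      tendsto_const_div_atTop_nhds_zero_nat _
    apply tendsto_of_tendsto_of_tendsto_of_le_of_le'
      (g := fun M : ℕ => β⁻¹*(Real.log (p₀ - d M) + Real.log 2)
            - β⁻¹*(2/(1-p₀))*((p₀-1/2)^2/(M:ℝ)))
      (h := fun M : ℕ => β⁻¹*(Real.log (p₀ - d M) + Real.log 2))
    · -- lower tendsto
      have hc2 : Filter.Tendsto (fun _ : ℕ => Real.log 2) Filter.atTop (nhds (Real.log 2)) :=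
        tendsto_const_nhds
      have h1 := (((hppd.log (ne_of_gt hp0pos)).add hc2).const_mul β⁻¹).sub
        (hsq.const_mul (β⁻¹*(2/(1-p₀))))
      simpa using h1
    · -- upper tendsto
      have hc2 : Filter.Tendsto (fun _ : ℕ => Real.log 2) Filter.atTop (nhds (Real.log 2)) :=
        tendsto_const_nhds
      simpa using ((hppd.log (ne_of_gt hp0pos)).add hc2).const_mul β⁻¹
    · -- lower bound eventually
      filter_upwards [Filter.eventually_ge_atTop 1] with M hM
      exact (sum_bounds β p₀ hβ hp₀ hp₀' M hM (d M) rfl).1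
    · -- upper bound eventually
      filter_upwards [Filter.eventually_ge_atTop 1] with M hM
      exact (sum_bounds β p₀ hβ hp₀ hp₀' M hM (d M) rfl).2
end

section
/- Let β > 0, p₀ ∈ (1/2, 1), p₁ := 1 − p₀, and i ∈ {0,1}. For each integer M ≥ 1 set δp := (p₀ − 1/2)/M and ν_M(l) := β⁻¹ · log((p₀ − l·δp)/(p₁ + l·δp)) for 0 ≤ l ≤ M. For each M, let x₁, …, x_M be independent {0,1}-valued random variables with P(x_l = 1) = p₁ + l·δp, and define the extracted work ΔW_M := (x₁ − i)·ν_M(1) + Σ_{l=2}^{M} (x_l − x_{l−1})·ν_M(l). Then ΔW_M converges in probability to its expectation: for every ε > 0, P(|ΔW_M − E[ΔW_M]| ≥ ε) → 0 as M → ∞. -/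
open MeasureTheory BigOperators

private lemma log_add_le_aux {a d : ℝ} (ha : 0 < a) (hd : 0 ≤ d) :
    Real.log (a + d) - Real.log a ≤ d / a := by
  rw [← Real.log_div (by positivity) ha.ne']
  have h := Real.log_le_sub_one_of_pos (show (0:ℝ) < (a + d) / a by positivity)
  have h2 : (a + d) / a - 1 = d / a := by field_simp; ring
  linarith

private lemma work_bound {Ω : Type*} [MeasurableSpace Ω] (P : Measure Ω)
    [IsProbabilityMeasure P] (β p₀ : ℝ) (hβ : 0 < β) (hp₀ : 1 / 2 < p₀) (hp₀' : p₀ < 1)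
    (i : Fin 2) (M : ℕ) (hM : 1 ≤ M) (x : ℕ → Ω → ℝ)
    (hmeas : ∀ l, 1 ≤ l → l ≤ M → Measurable (x l))
    (hval : ∀ l, 1 ≤ l → l ≤ M → ∀ ω, x l ω = 0 ∨ x l ω = 1)
    (hindep : ProbabilityTheory.iIndepFun
      (fun l : (Finset.Icc 1 M : Finset ℕ) => x (l : ℕ)) P)
    (ν : ℕ → ℝ)
    (hν : ∀ l : ℕ, ν l
      = β⁻¹ * Real.log ((p₀ - l * ((p₀ - 1 / 2) / M)) / ((1 - p₀) + l * ((p₀ - 1 / 2) / M))))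
    (ε : ℝ) (hε : 0 < ε) :
    P {ω | ε ≤ |((x 1 ω - ((i : ℕ) : ℝ)) * ν 1
          + ∑ l ∈ Finset.Icc 2 M, (x l ω - x (l - 1) ω) * ν l)
        - ∫ ω', ((x 1 ω' - ((i : ℕ) : ℝ)) * ν 1
          + ∑ l ∈ Finset.Icc 2 M, (x l ω' - x (l - 1) ω') * ν l) ∂P|}
      ≤ ENNReal.ofReal
          ((β⁻¹ * (2 + (1 - p₀)⁻¹) * (p₀ - 1 / 2)) ^ 2 / ε ^ 2 * (1 / M)) := by
  classical
  have hM0 : (0:ℝ) < M := by exact_mod_cast hM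
  have hp₁ : (0:ℝ) < 1 - p₀ := by linarith
  set δp : ℝ := (p₀ - 1 / 2) / M with hδp
  have hδp0 : 0 ≤ δp := by
    apply div_nonneg (by linarith) hM0.le
  have hMδp : (M : ℝ) * δp = p₀ - 1 / 2 := by
    rw [hδp]; field_simp
  set A : ℕ → ℝ := fun l => p₀ - l * δp with hA
  set B : ℕ → ℝ := fun l => (1 - p₀) + l * δp with hB
  have hAge : ∀ l : ℕ, l ≤ M → (1:ℝ)/2 ≤ A l := by
    intro l hl
    have h1 : (l : ℝ) * δp ≤ M * δp :=
      mul_le_mul_of_nonneg_right (by exact_mod_cast hl) hδp0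
    simp only [hA]; linarith [hMδp]
  have hBge : ∀ l : ℕ, (1 - p₀) ≤ B l := by
    intro l
    have : 0 ≤ (l:ℝ) * δp := mul_nonneg (Nat.cast_nonneg l) hδp0
    simp only [hB]; linarith
  have hApos : ∀ l : ℕ, l ≤ M → 0 < A l := fun l hl => lt_of_lt_of_le (by norm_num) (hAge l hl)
  have hBpos : ∀ l : ℕ, 0 < B l := fun l => lt_of_lt_of_le hp₁ (hBge l)
  have hνf : ∀ l : ℕ, l ≤ M → ν l = β⁻¹ * (Real.log (A l) - Real.log (B l)) := by
    intro l hl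
    rw [hν l, Real.log_div (hApos l hl).ne' (hBpos l).ne']
  have hνM : ν M = 0 := by
    rw [hν M]
    rw [show p₀ - (M:ℝ) * ((p₀ - 1/2)/M) = 1/2 by
        have := hMδp; rw [hδp] at this; linarith,
      show (1 - p₀) + (M:ℝ) * ((p₀ - 1/2)/M) = 1/2 by
        have := hMδp; rw [hδp] at this; linarith]
    norm_num
  set K : ℝ := β⁻¹ * (2 + (1 - p₀)⁻¹) * (p₀ - 1 / 2) with hK
  have hK0 : 0 ≤ K := by
    apply mul_nonneg (mul_nonneg (inv_nonneg.mpr hβ.le) _) (by linarith)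
    have : 0 ≤ (1 - p₀)⁻¹ := inv_nonneg.mpr hp₁.le
    linarith
  set c : ℕ → ℝ := fun l => ν l - ν (l + 1) with hc
  have hcb : ∀ l : ℕ, 1 ≤ l → l ≤ M - 1 → 0 ≤ c l ∧ c l ≤ K / M := by
    intro l h1 h2
    have hlM : l ≤ M := by omega
    have hl1M : l + 1 ≤ M := by omega
    have hAstep : A l = A (l + 1) + δp := by simp only [hA]; push_cast; ring
    have hBstep : B (l + 1) = B l + δp := by simp only [hB]; push_cast; ring
    have e1 : Real.log (A l) - Real.log (A (l + 1)) ≤ 2 * δp := by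
      rw [hAstep]
      calc Real.log (A (l+1) + δp) - Real.log (A (l+1)) ≤ δp / A (l+1) :=
            log_add_le_aux (hApos _ hl1M) hδp0
        _ ≤ δp / (1/2) := by
            apply div_le_div_of_nonneg_left hδp0 (by norm_num) (hAge _ hl1M)
        _ = 2 * δp := by ring
    have e1' : 0 ≤ Real.log (A l) - Real.log (A (l + 1)) := by
      rw [hAstep]
      have := Real.log_le_log (hApos _ hl1M) (by linarith : A (l+1) ≤ A (l+1) + δp)
      linarith
    have e2 : Real.log (B (l + 1)) - Real.log (B l) ≤ δp * (1 - p₀)⁻¹ := by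
      rw [hBstep]
      calc Real.log (B l + δp) - Real.log (B l) ≤ δp / B l :=
            log_add_le_aux (hBpos l) hδp0
        _ ≤ δp / (1 - p₀) := div_le_div_of_nonneg_left hδp0 hp₁ (hBge l)
        _ = δp * (1 - p₀)⁻¹ := by ring
    have e2' : 0 ≤ Real.log (B (l + 1)) - Real.log (B l) := by
      rw [hBstep]
      have := Real.log_le_log (hBpos l) (by linarith : B l ≤ B l + δp)
      linarith
    have hclf : c l = β⁻¹ * ((Real.log (A l) - Real.log (A (l+1)))
        + (Real.log (B (l+1)) - Real.log (B l))) := by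
      simp only [hc]
      rw [hνf l hlM, hνf (l+1) hl1M]; ring
    constructor
    · rw [hclf]
      exact mul_nonneg (inv_nonneg.mpr hβ.le) (by linarith)
    · rw [hclf]
      have hsum : (Real.log (A l) - Real.log (A (l+1)))
          + (Real.log (B (l+1)) - Real.log (B l)) ≤ (2 + (1 - p₀)⁻¹) * δp := by
        have : δp * (1 - p₀)⁻¹ = (1 - p₀)⁻¹ * δp := by ring
        nlinarith [e1, e2]
      calc β⁻¹ * ((Real.log (A l) - Real.log (A (l+1)))
            + (Real.log (B (l+1)) - Real.log (B l)))
          ≤ β⁻¹ * ((2 + (1 - p₀)⁻¹) * δp) :=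
            mul_le_mul_of_nonneg_left hsum (inv_nonneg.mpr hβ.le)
        _ = K / M := by rw [hK, hδp]; ring
  set Y : ℕ → Ω → ℝ := fun l ω => c l * x l ω with hY
  set X : Ω → ℝ := ∑ l ∈ Finset.Icc 1 (M - 1), Y l with hX
  have hXapp : ∀ ω, X ω = ∑ l ∈ Finset.Icc 1 (M - 1), c l * x l ω := by
    intro ω; simp [hX, hY, Finset.sum_apply]
  set g : ℝ := -(((i : ℕ) : ℝ) * ν 1) with hg
  set ΔW : Ω → ℝ := fun ω => (x 1 ω - ((i : ℕ) : ℝ)) * ν 1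
      + ∑ l ∈ Finset.Icc 2 M, (x l ω - x (l - 1) ω) * ν l with hΔW
  have hrepr : ∀ ω, ΔW ω = g + X ω := by
    intro ω
    have hsplit : ∑ l ∈ Finset.Icc 2 M, (x l ω - x (l - 1) ω) * ν l
        = ∑ l ∈ Finset.Icc 2 M, x l ω * ν l - ∑ l ∈ Finset.Icc 2 M, x (l - 1) ω * ν l := by
      rw [← Finset.sum_sub_distrib]
      exact Finset.sum_congr rfl fun l _ => by ring
    have hmap : ∑ l ∈ Finset.Icc 2 M, x (l - 1) ω * ν l
        = ∑ k ∈ Finset.Icc 1 (M - 1), x k ω * ν (k + 1) := by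
      have hI : Finset.Icc 2 M = Finset.map (addLeftEmbedding 1) (Finset.Icc 1 (M - 1)) := by
        rw [Finset.map_add_left_Icc]
        congr 1 <;> omega
      rw [hI, Finset.sum_map]
      apply Finset.sum_congr rfl
      intro k _
      have h1 : 1 + k - 1 = k := by omega
      have h2 : 1 + k = k + 1 := by omega
      simp only [addLeftEmbedding_apply, h2, Nat.add_sub_cancel]
    have hins1 : ∑ l ∈ Finset.Icc 1 M, x l ω * ν l
        = x 1 ω * ν 1 + ∑ l ∈ Finset.Icc 2 M, x l ω * ν l := by
      have h12 : Finset.Icc 1 M = insert 1 (Finset.Icc 2 M) := by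
        ext a; simp only [Finset.mem_Icc, Finset.mem_insert]; omega
      rw [h12, Finset.sum_insert (by simp [Finset.mem_Icc])]
    have hins2 : ∑ l ∈ Finset.Icc 1 M, x l ω * ν l
        = (∑ l ∈ Finset.Icc 1 (M - 1), x l ω * ν l) + x M ω * ν M := by
      have h12 : Finset.Icc 1 M = insert M (Finset.Icc 1 (M - 1)) := by
        ext a; simp only [Finset.mem_Icc, Finset.mem_insert]; omega
      rw [h12, Finset.sum_insert (by simp only [Finset.mem_Icc]; omega)]
      ring
    have hmain : ∑ l ∈ Finset.Icc 2 M, x l ω * ν l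
        = (∑ l ∈ Finset.Icc 1 (M - 1), x l ω * ν l) + x M ω * ν M - x 1 ω * ν 1 := by
      linarith [hins1, hins2]
    have hcomb : (∑ l ∈ Finset.Icc 1 (M - 1), x l ω * ν l)
        - ∑ l ∈ Finset.Icc 1 (M - 1), x l ω * ν (l + 1)
        = ∑ l ∈ Finset.Icc 1 (M - 1), c l * x l ω := by
      rw [← Finset.sum_sub_distrib]
      exact Finset.sum_congr rfl fun l _ => by simp only [hc]; ring
    calc ΔW ω = (x 1 ω - ((i : ℕ) : ℝ)) * ν 1
          + (((∑ l ∈ Finset.Icc 1 (M - 1), x l ω * ν l) + x M ω * ν M - x 1 ω * ν 1)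
            - ∑ k ∈ Finset.Icc 1 (M - 1), x k ω * ν (k + 1)) := by
          rw [hΔW]; dsimp only; rw [hsplit, hmap, hmain]
      _ = g + ((∑ l ∈ Finset.Icc 1 (M - 1), x l ω * ν l)
            - ∑ k ∈ Finset.Icc 1 (M - 1), x k ω * ν (k + 1)) := by
          rw [hνM, hg]; ring
      _ = g + X ω := by rw [hcomb, hXapp]
  have hx2 : ∀ l, 1 ≤ l → l ≤ M → MemLp (x l) 2 P := by
    intro l h1 h2
    apply MemLp.of_bound (hmeas l h1 h2).aestronglyMeasurable 1
    apply Filter.Eventually.of_forall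
    intro ω
    rcases hval l h1 h2 ω with h | h <;> simp [h]
  have hY2 : ∀ l ∈ Finset.Icc 1 (M - 1), MemLp (Y l) 2 P := by
    intro l hl
    obtain ⟨h1, h2⟩ := Finset.mem_Icc.mp hl
    exact (hx2 l h1 (by omega)).const_mul (c l)
  have hX2 : MemLp X 2 P := memLp_finset_sum' _ hY2
  have hXint : Integrable X P := hX2.integrable one_le_two
  have hEW : ∫ ω', ΔW ω' ∂P = g + ∫ ω', X ω' ∂P := by
    calc ∫ ω', ΔW ω' ∂P = ∫ ω', (g + X ω') ∂P :=
          integral_congr_ae (Filter.Eventually.of_forall hrepr)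
      _ = (∫ _, g ∂P) + ∫ ω', X ω' ∂P := integral_add (integrable_const g) hXint
      _ = g + ∫ ω', X ω' ∂P := by simp
  have hset : {ω | ε ≤ |ΔW ω - ∫ ω', ΔW ω' ∂P|} = {ω | ε ≤ |X ω - ∫ ω', X ω' ∂P|} := by
    ext ω
    simp only [Set.mem_setOf_eq, hrepr ω, hEW]
    rw [show g + X ω - (g + ∫ ω', X ω' ∂P) = X ω - ∫ ω', X ω' ∂P by ring]
  -- variance bound
  have hpair : Set.Pairwise ↑(Finset.Icc 1 (M - 1))
      (fun l m => ProbabilityTheory.IndepFun (Y l) (Y m) P) := by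
    intro l hl m hm hlm
    simp only [Finset.coe_Icc, Set.mem_Icc] at hl hm
    have hlM : l ∈ Finset.Icc 1 M := Finset.mem_Icc.mpr ⟨hl.1, by omega⟩
    have hmM : m ∈ Finset.Icc 1 M := Finset.mem_Icc.mpr ⟨hm.1, by omega⟩
    have hne : (⟨l, hlM⟩ : (Finset.Icc 1 M : Finset ℕ)) ≠ ⟨m, hmM⟩ := by
      simp only [ne_eq, Subtype.mk.injEq]; exact hlm
    have hxy := hindep.indepFun hne
    exact hxy.comp (measurable_const_mul (c l)) (measurable_const_mul (c m))
  have hVX : ProbabilityTheory.variance X P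
      = ∑ l ∈ Finset.Icc 1 (M - 1), ProbabilityTheory.variance (Y l) P :=
    ProbabilityTheory.IndepFun.variance_sum hY2 hpair
  have hVle : ∀ l ∈ Finset.Icc 1 (M - 1), ProbabilityTheory.variance (Y l) P ≤ (K / M) ^ 2 := by
    intro l hl
    obtain ⟨h1, h2⟩ := Finset.mem_Icc.mp hl
    have hvl : ProbabilityTheory.variance (x l) P ≤ 1 := by
      have hb := ProbabilityTheory.variance_le_sq_of_bounded (μ := P) (a := 0) (b := 1)
        (Filter.Eventually.of_forall fun ω => by
          rcases hval l h1 (by omega) ω with h | h <;> simp [h])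
        ((hmeas l h1 (by omega)).aemeasurable)
      refine hb.trans (by norm_num)
    have hcl := hcb l h1 h2
    have hvm : ProbabilityTheory.variance (Y l) P
        = (c l) ^ 2 * ProbabilityTheory.variance (x l) P :=
      ProbabilityTheory.variance_const_mul (c l) (x l) P
    rw [hvm]
    calc (c l) ^ 2 * ProbabilityTheory.variance (x l) P ≤ (K / M) ^ 2 * 1 := by
          apply mul_le_mul _ hvl (ProbabilityTheory.variance_nonneg _ _) (by positivity)
          exact pow_le_pow_left₀ hcl.1 hcl.2 2
      _ = (K / M) ^ 2 := mul_one _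
  have hVar : ProbabilityTheory.variance X P ≤ K ^ 2 / M := by
    rw [hVX]
    calc ∑ l ∈ Finset.Icc 1 (M - 1), ProbabilityTheory.variance (Y l) P
        ≤ ∑ _l ∈ Finset.Icc 1 (M - 1), (K / M) ^ 2 := Finset.sum_le_sum hVle
      _ = ((M - 1 : ℕ) : ℝ) * (K / M) ^ 2 := by
          rw [Finset.sum_const, Nat.card_Icc, nsmul_eq_mul]
          norm_num
      _ ≤ (M : ℝ) * (K / M) ^ 2 := by
          apply mul_le_mul_of_nonneg_right _ (by positivity)
          exact_mod_cast Nat.sub_le M 1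
      _ = K ^ 2 / M := by field_simp
  calc P {ω | ε ≤ |ΔW ω - ∫ ω', ΔW ω' ∂P|}
      = P {ω | ε ≤ |X ω - ∫ ω', X ω' ∂P|} := by rw [hset]
    _ ≤ ENNReal.ofReal (ProbabilityTheory.variance X P / ε ^ 2) :=
        ProbabilityTheory.meas_ge_le_variance_div_sq hX2 hε
    _ ≤ ENNReal.ofReal (K ^ 2 / ε ^ 2 * (1 / M)) := by
        apply ENNReal.ofReal_le_ofReal
        calc ProbabilityTheory.variance X P / ε ^ 2 ≤ (K ^ 2 / M) / ε ^ 2 := by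
              gcongr
          _ = K ^ 2 / ε ^ 2 * (1 / M) := by ring

/-- **Concentration of the extracted work** (concentration part of the paper's
Theorem 9.1).  Let `β > 0`, `p₀ ∈ (1/2, 1)`, `p₁ = 1 - p₀`, `i ∈ {0,1}`.  For each `M` set
`δp = (p₀ - 1/2)/M` and `ν_M(l) = β⁻¹ log((p₀ - l δp)/(p₁ + l δp))`.  For each `M`, let
`x 1, …, x M` be independent `{0,1}`-valued random variables on a probability space
`(Ω M, P M)` with `P(x l = 1) = p₁ + l δp`, and define the extracted work
`ΔW_M = (x 1 - i) ν_M(1) + Σ_{l=2}^M (x l - x (l-1)) ν_M(l)`.  Then `ΔW_M` converges in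
probability to its expectation: for every `ε > 0`,
`P(|ΔW_M - E[ΔW_M]| ≥ ε) → 0` as `M → ∞`. -/
theorem stmt3 (β p₀ : ℝ) (hβ : 0 < β) (hp₀ : 1 / 2 < p₀) (hp₀' : p₀ < 1) (i : Fin 2)
    (Ω : ℕ → Type*) [∀ M, MeasurableSpace (Ω M)]
    (P : ∀ M, Measure (Ω M)) [∀ M, IsProbabilityMeasure (P M)]
    (x : ∀ M : ℕ, ℕ → Ω M → ℝ)
    (hmeas : ∀ M l, 1 ≤ l → l ≤ M → Measurable (x M l))
    (hval : ∀ M l, 1 ≤ l → l ≤ M → ∀ ω, x M l ω = 0 ∨ x M l ω = 1)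
    (hindep : ∀ M, ProbabilityTheory.iIndepFun
      (fun l : (Finset.Icc 1 M : Finset ℕ) => x M (l : ℕ)) (P M))
    (hprob : ∀ M l, 1 ≤ l → l ≤ M →
      P M {ω | x M l ω = 1}
        = ENNReal.ofReal ((1 - p₀) + l * ((p₀ - 1 / 2) / M)))
    (ε : ℝ) (hε : 0 < ε) :
    Filter.Tendsto
      (fun M : ℕ =>
        let δp : ℝ := (p₀ - 1 / 2) / M
        let ν : ℕ → ℝ := (fun l => β⁻¹ * Real.log ((p₀ - l * δp) / ((1 - p₀) + l * δp)))
        let ΔW : Ω M → ℝ := (fun ω =>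
          (x M 1 ω - ((i : ℕ) : ℝ)) * ν 1
            + ∑ l ∈ Finset.Icc 2 M, (x M l ω - x M (l - 1) ω) * ν l)
        P M {ω | ε ≤ |ΔW ω - ∫ ω', ΔW ω' ∂(P M)|})
      Filter.atTop (nhds 0) := by
  set K : ℝ := β⁻¹ * (2 + (1 - p₀)⁻¹) * (p₀ - 1 / 2) with hK
  refine tendsto_of_tendsto_of_tendsto_of_le_of_le'
    (h := fun M : ℕ => ENNReal.ofReal (K ^ 2 / ε ^ 2 * (1 / (M : ℝ)))) tendsto_const_nhds ?_
    (Filter.Eventually.of_forall fun M => zero_le) ?_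
  · have h1 : Filter.Tendsto (fun M : ℕ => K ^ 2 / ε ^ 2 * (1 / (M : ℝ)))
        Filter.atTop (nhds 0) := by
      simpa using (tendsto_const_nhds (x := K ^ 2 / ε ^ 2)).mul tendsto_one_div_atTop_nhds_zero_nat
    simpa using ENNReal.tendsto_ofReal h1
  · filter_upwards [Filter.eventually_ge_atTop 1] with M hM
    exact work_bound (P M) β p₀ hβ hp₀ hp₀' i M hM (x M) (hmeas M) (hval M) (hindep M)
      (fun l => β⁻¹ * Real.log ((p₀ - l * ((p₀ - 1 / 2) / M)) / ((1 - p₀) + l * ((p₀ - 1 / 2) / M))))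
      (fun l => rfl) ε hε
end

section
/- Let β > 0. Let φ₀, φ₁ be an orthonormal basis of ℂ², let p₀, p₁ ∈ (0,1) with p₀ + p₁ = 1, and set ρ* := p₀·|φ₀⟩⟨φ₀| + p₁·|φ₁⟩⟨φ₁|. Let ρ be any Hermitian positive-definite 2×2 complex matrix with Tr(ρ) = 1. Then ⟨φ₀, ρ φ₀⟩·β⁻¹·(log 2 + log p₀) + ⟨φ₁, ρ φ₁⟩·β⁻¹·(log 2 + log p₁) = β⁻¹·(D(ρ‖I/2) − D(ρ‖ρ*)), where I is the 2×2 identity matrix. -/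
open Matrix BigOperators ComplexOrder

/-- The matrix logarithm of a Hermitian matrix, via the spectral decomposition
(continuous functional calculus applied to the real natural logarithm of the
eigenvalues).  Junk value `0` on non-Hermitian input. -/
noncomputable def matLog {n : ℕ} (A : Matrix (Fin n) (Fin n) ℂ) :
    Matrix (Fin n) (Fin n) ℂ :=
  if hA : A.IsHermitian then
    (hA.eigenvectorUnitary : Matrix (Fin n) (Fin n) ℂ) *
      Matrix.diagonal (fun i => (Real.log (hA.eigenvalues i) : ℂ)) *
      star (hA.eigenvectorUnitary : Matrix (Fin n) (Fin n) ℂ)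
  else 0

/-- The quantum relative entropy `D(ρ‖σ) = Tr(ρ (log ρ - log σ))` of (Hermitian
positive-definite) matrices. -/
noncomputable def relEntropy {n : ℕ} (ρ σ : Matrix (Fin n) (Fin n) ℂ) : ℂ :=
  (ρ * (matLog ρ - matLog σ)).trace

lemma matLog_eq_cfc {n : ℕ} {A : Matrix (Fin n) (Fin n) ℂ} (hA : A.IsHermitian) :
    matLog A = cfc Real.log A := by
  rw [matLog, dif_pos hA, hA.cfc_eq]
  rfl

lemma matLog_half : matLog (((2 : ℂ)⁻¹) • (1 : Matrix (Fin 2) (Fin 2) ℂ))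
    = ((-(Real.log 2) : ℝ) : ℂ) • 1 := by
  have h1 : ((2 : ℂ)⁻¹) • (1 : Matrix (Fin 2) (Fin 2) ℂ)
      = algebraMap ℝ (Matrix (Fin 2) (Fin 2) ℂ) (2⁻¹ : ℝ) := by
    rw [Algebra.algebraMap_eq_smul_one]
    ext i j
    simp
  have hH : (((2 : ℂ)⁻¹) • (1 : Matrix (Fin 2) (Fin 2) ℂ)).IsHermitian := by
    rw [h1]
    exact IsSelfAdjoint.algebraMap _ (IsSelfAdjoint.all _)
  rw [matLog_eq_cfc hH, h1, cfc_algebraMap, Real.log_inv, Algebra.algebraMap_eq_smul_one]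
  ext i j
  simp

lemma trace_mul_vecMulVec (ρ : Matrix (Fin 2) (Fin 2) ℂ) (φ : Fin 2 → ℂ) :
    (ρ * Matrix.vecMulVec φ (star φ)).trace = star φ ⬝ᵥ ρ *ᵥ φ := by
  simp only [Matrix.trace, Matrix.diag, Matrix.mul_apply, Matrix.vecMulVec_apply,
    Pi.star_apply, dotProduct, Matrix.mulVec, Finset.mul_sum]
  exact Finset.sum_congr rfl fun i _ => Finset.sum_congr rfl fun j _ => by ring

/-- **Expected work of the `ρ*`-ideal extraction protocol on an arbitrary input**
(part 2 of the paper's Theorem 9.2).  Let `β > 0`, `φ₀, φ₁` an orthonormal basis of `ℂ²`,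
`p₀, p₁ ∈ (0,1)` with `p₀ + p₁ = 1`, `ρ* = p₀ |φ₀⟩⟨φ₀| + p₁ |φ₁⟩⟨φ₁|`, and `ρ` any
Hermitian positive-definite `2×2` matrix of trace one.  Then
`⟨φ₀, ρ φ₀⟩ β⁻¹ (log 2 + log p₀) + ⟨φ₁, ρ φ₁⟩ β⁻¹ (log 2 + log p₁)
  = β⁻¹ (D(ρ‖I/2) - D(ρ‖ρ*))`. -/
theorem stmt4 (β : ℝ) (hβ : 0 < β)
    (φ₀ φ₁ : Fin 2 → ℂ)
    (hnorm0 : star φ₀ ⬝ᵥ φ₀ = 1) (hnorm1 : star φ₁ ⬝ᵥ φ₁ = 1)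
    (horth : star φ₀ ⬝ᵥ φ₁ = 0)
    (p₀ p₁ : ℝ) (hp₀ : 0 < p₀) (hp₀' : p₀ < 1) (hp₁ : 0 < p₁) (hp₁' : p₁ < 1)
    (hp : p₀ + p₁ = 1)
    (ρ : Matrix (Fin 2) (Fin 2) ℂ) (hρ : ρ.PosDef) (hρtr : ρ.trace = 1) :
    (star φ₀ ⬝ᵥ ρ *ᵥ φ₀) * ((β⁻¹ * (Real.log 2 + Real.log p₀) : ℝ) : ℂ)
      + (star φ₁ ⬝ᵥ ρ *ᵥ φ₁) * ((β⁻¹ * (Real.log 2 + Real.log p₁) : ℝ) : ℂ)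
      = ((β⁻¹ : ℝ) : ℂ) *
        (relEntropy ρ (((2 : ℂ)⁻¹) • (1 : Matrix (Fin 2) (Fin 2) ℂ))
          - relEntropy ρ
              ((p₀ : ℂ) • Matrix.vecMulVec φ₀ (star φ₀)
                + (p₁ : ℂ) • Matrix.vecMulVec φ₁ (star φ₁))) := by
  simp only [relEntropy]
  set σ : Matrix (Fin 2) (Fin 2) ℂ :=
    (p₀ : ℂ) • Matrix.vecMulVec φ₀ (star φ₀) + (p₁ : ℂ) • Matrix.vecMulVec φ₁ (star φ₁) with hσdef
  set U : Matrix (Fin 2) (Fin 2) ℂ := Matrix.of fun i j => if j = 0 then φ₀ i else φ₁ i with hUdef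
  have horth' : star φ₁ ⬝ᵥ φ₀ = 0 := by
    have := congrArg (starRingEnd ℂ) horth
    simpa [dotProduct, map_sum, mul_comm] using this
  -- U is unitary
  have h00 : (starRingEnd ℂ) (φ₀ 0) * φ₀ 0 + (starRingEnd ℂ) (φ₀ 1) * φ₀ 1 = 1 := by
    simpa [dotProduct, Fin.sum_univ_two] using hnorm0
  have h11 : (starRingEnd ℂ) (φ₁ 0) * φ₁ 0 + (starRingEnd ℂ) (φ₁ 1) * φ₁ 1 = 1 := by
    simpa [dotProduct, Fin.sum_univ_two] using hnorm1
  have h01 : (starRingEnd ℂ) (φ₀ 0) * φ₁ 0 + (starRingEnd ℂ) (φ₀ 1) * φ₁ 1 = 0 := by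
    simpa [dotProduct, Fin.sum_univ_two] using horth
  have h10 : (starRingEnd ℂ) (φ₁ 0) * φ₀ 0 + (starRingEnd ℂ) (φ₁ 1) * φ₀ 1 = 0 := by
    simpa [dotProduct, Fin.sum_univ_two] using horth'
  have hU : star U * U = 1 := by
    ext i j
    fin_cases i <;> fin_cases j <;>
      simp [hUdef, Matrix.mul_apply, Matrix.one_apply, Fin.sum_univ_two, h00, h11, h01, h10]
  have hUmem : U ∈ Matrix.unitaryGroup (Fin 2) ℂ := Matrix.mem_unitaryGroup_iff'.mpr hU
  have hUU : U * star U = 1 := mul_eq_one_comm.mp hU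
  -- completeness
  have hcomp : Matrix.vecMulVec φ₀ (star φ₀) + Matrix.vecMulVec φ₁ (star φ₁) = 1 := by
    rw [← hUU]
    ext i j
    simp [hUdef, Matrix.mul_apply, Fin.sum_univ_two, Matrix.vecMulVec_apply, mul_comm]
  -- diagonalization of σ
  have hσU : σ = U * Matrix.diagonal (fun i => if i = 0 then (p₀ : ℂ) else (p₁ : ℂ)) * star U := by
    ext i j
    simp [hσdef, hUdef, Matrix.mul_apply, Fin.sum_univ_two, Matrix.diagonal,
      Matrix.vecMulVec_apply, mul_comm]
    ring
  -- Hermitian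
  have hσH : σ.IsHermitian := by
    rw [hσU]
    refine Matrix.isHermitian_mul_mul_conjTranspose U
      (Matrix.isHermitian_diagonal_of_self_adjoint _ ?_)
    ext i
    by_cases h : i = 0 <;> simp [h]
  -- spectrum
  have hspec : spectrum ℝ σ ⊆ {p₀, p₁} := by
    intro x hx
    have hUmem2 : U ∈ unitary (Matrix (Fin 2) (Fin 2) ℂ) := ⟨hU, hUU⟩
    rw [hσU, show U = ((⟨U, hUmem2⟩ : unitary (Matrix (Fin 2) (Fin 2) ℂ)) :
        Matrix (Fin 2) (Fin 2) ℂ) from rfl, Unitary.spectrum_star_right_conjugate,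
      ← spectrum.algebraMap_mem_iff ℂ, spectrum_diagonal] at hx
    obtain ⟨i, hi⟩ := hx
    fin_cases i <;> simp at hi
    · left; exact_mod_cast hi.symm
    · right; exact_mod_cast hi.symm
  -- affine interpolation of log on the spectrum
  set c : ℝ := if p₀ = p₁ then 0 else (Real.log p₁ - Real.log p₀) / (p₁ - p₀) with hcdef
  have hgp1 : Real.log p₁ = Real.log p₀ + c * (p₁ - p₀) := by
    by_cases h : p₀ = p₁
    · simp [hcdef, h]
    · have hne : p₁ - p₀ ≠ 0 := sub_ne_zero.mpr (Ne.symm h)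
      rw [hcdef, if_neg h, div_mul_cancel₀ _ hne]
      ring
  set b : ℝ := Real.log p₀ - c * p₀ with hbdef
  have hsmul : ∀ (r : ℝ) (M : Matrix (Fin 2) (Fin 2) ℂ), r • M = (r : ℂ) • M := by
    intro r M; ext i j; simp [Complex.real_smul]
  have hmatLogσ : matLog σ = (b : ℂ) • 1 + (c : ℂ) • σ := by
    rw [matLog_eq_cfc hσH]
    have hsa : IsSelfAdjoint σ := hσH
    have h1 : cfc Real.log σ = cfc (fun x : ℝ => b + c * x) σ := by
      apply cfc_congr
      intro x hx
      rcases hspec hx with h | h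
      · subst h; rw [hbdef]; ring
      · simp only [Set.mem_singleton_iff] at h
        subst h; rw [hgp1, hbdef]; ring
    rw [h1, cfc_add σ _ _, cfc_const b σ hsa, cfc_const_mul c (fun x : ℝ => x) σ,
      cfc_id' ℝ σ hsa, Algebra.algebraMap_eq_smul_one, hsmul, hsmul]
  -- traces
  set E₀ : ℂ := star φ₀ ⬝ᵥ ρ *ᵥ φ₀ with hE0def
  set E₁ : ℂ := star φ₁ ⬝ᵥ ρ *ᵥ φ₁ with hE1def
  have hEsum : E₀ + E₁ = 1 := by
    rw [hE0def, hE1def, ← trace_mul_vecMulVec, ← trace_mul_vecMulVec, ← Matrix.trace_add,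
      ← Matrix.mul_add, hcomp, Matrix.mul_one, hρtr]
  have htrσ : (ρ * σ).trace = (p₀ : ℂ) * E₀ + (p₁ : ℂ) * E₁ := by
    rw [hσdef, Matrix.mul_add, Matrix.mul_smul, Matrix.mul_smul, Matrix.trace_add,
      Matrix.trace_smul, Matrix.trace_smul, trace_mul_vecMulVec, trace_mul_vecMulVec,
      smul_eq_mul, smul_eq_mul, hE0def, hE1def]
  have htrhalf : (ρ * matLog (((2 : ℂ)⁻¹) • (1 : Matrix (Fin 2) (Fin 2) ℂ))).trace
      = ((-(Real.log 2) : ℝ) : ℂ) := by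
    rw [matLog_half, Matrix.mul_smul, Matrix.mul_one, Matrix.trace_smul, hρtr, smul_eq_mul,
      mul_one]
  have htrlogσ : (ρ * matLog σ).trace = (b : ℂ) + (c : ℂ) * ((p₀ : ℂ) * E₀ + (p₁ : ℂ) * E₁) := by
    rw [hmatLogσ, Matrix.mul_add, Matrix.mul_smul, Matrix.mul_smul, Matrix.mul_one,
      Matrix.trace_add, Matrix.trace_smul, Matrix.trace_smul, hρtr, htrσ, smul_eq_mul,
      smul_eq_mul, mul_one]
  -- put together
  have hRHS : (ρ * (matLog ρ - matLog (((2 : ℂ)⁻¹) • (1 : Matrix (Fin 2) (Fin 2) ℂ)))).trace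
      - (ρ * (matLog ρ - matLog σ)).trace
      = (ρ * matLog σ).trace
        - (ρ * matLog (((2 : ℂ)⁻¹) • (1 : Matrix (Fin 2) (Fin 2) ℂ))).trace := by
    rw [Matrix.mul_sub, Matrix.mul_sub, Matrix.trace_sub, Matrix.trace_sub]
    ring
  rw [hRHS, htrlogσ, htrhalf]
  have hE1' : E₁ = 1 - E₀ := by rw [← hEsum]; ring
  have hlog1 : (Real.log p₁ : ℂ) = (Real.log p₀ : ℂ) + (c : ℂ) * ((p₁ : ℂ) - (p₀ : ℂ)) := by
    exact_mod_cast congrArg (fun t : ℝ => (t : ℂ)) hgp1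
  rw [hE1']
  push_cast [hbdef, hlog1]
  ring
end

section
/- Let E : Fin 4 → M₂ be a qubit SIC family with effects M_x := (1/2)·E_x. Let N ≥ 14 be an integer and let π = (π_t)_{t=1}^N be any adaptive policy for horizon N. Then there exists a 2×2 density matrix ρ such that the cumulative regret of π against ρ satisfies Regret(N, ρ, π) ≥ (1/(8·e·√24))·√N. -/
open Matrix BigOperators ComplexOrder


section QBaux
variable {β : Type*} [Fintype β]

private lemma factor_snoc {n : ℕ} (W : (t : ℕ) → (Fin t → β) → β → ℝ)
    (g : Fin n → β) (x : β) (s : Fin n) :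
    W ((s.castSucc : Fin (n+1)) : ℕ)
      (fun r : Fin ((s.castSucc : Fin (n+1)) : ℕ) =>
        (Fin.snoc g x : Fin (n+1) → β) ⟨(r : ℕ), r.2.trans s.castSucc.2⟩)
      ((Fin.snoc g x : Fin (n+1) → β) s.castSucc)
    = W (s : ℕ) (fun r : Fin (s : ℕ) => g ⟨(r : ℕ), r.2.trans s.2⟩) (g s) := by
  rw [Fin.snoc_castSucc]
  show W (s : ℕ)
      (fun r : Fin (s : ℕ) =>
        (Fin.snoc g x : Fin (n+1) → β) ⟨(r : ℕ), r.2.trans s.castSucc.2⟩) (g s) = _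
  refine congrArg (fun h => W (s : ℕ) h (g s)) (funext fun r => ?_)
  show (Fin.snoc g x : Fin (n+1) → β) ((⟨(r : ℕ), r.2.trans s.2⟩ : Fin n).castSucc) = _
  rw [Fin.snoc_castSucc]

private lemma factor_last {n : ℕ} (W : (t : ℕ) → (Fin t → β) → β → ℝ)
    (g : Fin n → β) (x : β) :
    W ((Fin.last n : Fin (n+1)) : ℕ)
      (fun r : Fin ((Fin.last n : Fin (n+1)) : ℕ) =>
        (Fin.snoc g x : Fin (n+1) → β) ⟨(r : ℕ), r.2.trans (Fin.last n).2⟩)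
      ((Fin.snoc g x : Fin (n+1) → β) (Fin.last n))
    = W n g x := by
  rw [Fin.snoc_last]
  show W n (fun r : Fin n =>
      (Fin.snoc g x : Fin (n+1) → β) ⟨(r : ℕ), r.2.trans (Fin.last n).2⟩) x = _
  refine congrArg (fun h => W n h x) (funext fun r => ?_)
  show (Fin.snoc g x : Fin (n+1) → β) (Fin.castSucc r) = _
  rw [Fin.snoc_castSucc]

private lemma traj_sum_snoc {n : ℕ} (W : (t : ℕ) → (Fin t → β) → β → ℝ) :
    (∑ traj : Fin (n+1) → β, ∏ s : Fin (n+1),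
        W (s : ℕ) (fun r : Fin (s : ℕ) => traj ⟨(r : ℕ), r.2.trans s.2⟩) (traj s))
    = ∑ g : Fin n → β,
        (∏ s : Fin n, W (s : ℕ)
            (fun r : Fin (s : ℕ) => g ⟨(r : ℕ), r.2.trans s.2⟩) (g s)) * (∑ x, W n g x) := by
  rw [← Equiv.sum_comp (Fin.snocEquiv (fun _ : Fin (n+1) => β)), Fintype.sum_prod_type]
  rw [Finset.sum_comm]
  refine Finset.sum_congr rfl fun g _ => ?_
  rw [Finset.mul_sum]
  refine Finset.sum_congr rfl fun x _ => ?_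
  simp only [Fin.snocEquiv_apply]
  rw [Fin.prod_univ_castSucc]
  congr 1
  · exact Finset.prod_congr rfl fun s _ => factor_snoc W g x s
  · exact factor_last W g x

private lemma traj_sum_ge (c : ℝ) (hc : 0 ≤ c) :
    ∀ (n : ℕ) (W : (t : ℕ) → (Fin t → β) → β → ℝ),
      (∀ t h x, 0 ≤ W t h x) →
      (∀ (t : ℕ) (h : Fin t → β), c ≤ ∑ x, W t h x) →
      c ^ n ≤ ∑ traj : Fin n → β, ∏ s : Fin n,
        W (s : ℕ) (fun r : Fin (s : ℕ) => traj ⟨(r : ℕ), r.2.trans s.2⟩) (traj s)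
  | 0, W, hW0, hW => by simp
  | (n+1), W, hW0, hW => by
    rw [traj_sum_snoc W]
    calc c ^ (n+1) = c ^ n * c := by ring
    _ ≤ (∑ g : Fin n → β, ∏ s : Fin n,
          W (s : ℕ) (fun r : Fin (s : ℕ) => g ⟨(r : ℕ), r.2.trans s.2⟩) (g s)) * c :=
        mul_le_mul_of_nonneg_right (traj_sum_ge c hc n W hW0 hW) hc
    _ ≤ _ := by
        rw [Finset.sum_mul]
        refine Finset.sum_le_sum fun g _ => ?_
        exact mul_le_mul_of_nonneg_left (hW n g)
          (Finset.prod_nonneg fun s _ => hW0 _ _ _)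

private lemma traj_sum_eq_one :
    ∀ (n : ℕ) (W : (t : ℕ) → (Fin t → β) → β → ℝ),
      (∀ (t : ℕ) (h : Fin t → β), ∑ x, W t h x = 1) →
      (∑ traj : Fin n → β, ∏ s : Fin n,
        W (s : ℕ) (fun r : Fin (s : ℕ) => traj ⟨(r : ℕ), r.2.trans s.2⟩) (traj s)) = 1
  | 0, W, hW => by simp
  | (n+1), W, hW => by
    rw [traj_sum_snoc W]
    have h1 : ∀ g : Fin n → β,
        (∏ s : Fin n, W (s : ℕ)
            (fun r : Fin (s : ℕ) => g ⟨(r : ℕ), r.2.trans s.2⟩) (g s)) * (∑ x, W n g x)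
        = ∏ s : Fin n, W (s : ℕ)
            (fun r : Fin (s : ℕ) => g ⟨(r : ℕ), r.2.trans s.2⟩) (g s) :=
      fun g => by rw [hW n g, mul_one]
    rw [Finset.sum_congr rfl fun g _ => h1 g]
    exact traj_sum_eq_one n W hW

end QBaux

private noncomputable def rf (ε : ℝ) (c : Fin 4) : Fin 4 → ℝ :=
  fun y => if y = c then 1/4 + ε/4 else 1/4 - ε/12

private lemma rf_nonneg {ε : ℝ} (h0 : 0 ≤ ε) (h1 : ε ≤ 1/2) (c y : Fin 4) :
    0 ≤ rf ε c y := by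
  unfold rf; split <;> linarith

private lemma rf_decomp (ε : ℝ) (c x : Fin 4) :
    rf ε c x = (1/4 - ε/12) + (ε/3) * (if x = c then 1 else 0) := by
  unfold rf; split <;> ring

private lemma rf_sum (ε : ℝ) (c : Fin 4) : ∑ y, rf ε c y = 1 := by
  rw [Finset.sum_congr rfl fun y _ => rf_decomp ε c y, Finset.sum_add_distrib,
    Finset.sum_const, ← Finset.mul_sum, Finset.sum_ite_eq' Finset.univ c fun _ => (1:ℝ)]
  simp
  ring

private lemma bhatt_step {ε : ℝ} (h0 : 0 ≤ ε) (h1 : ε ≤ 1/2) {c c' : Fin 4} (hcc : c ≠ c') :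
    1 - ε^2/3 ≤ ∑ y, Real.sqrt (rf ε c y * rf ε c' y) := by
  obtain ⟨l, hl_def⟩ : ∃ l : ℝ, l = 1/4 - ε/12 := ⟨_, rfl⟩
  obtain ⟨h, hh_def⟩ : ∃ h : ℝ, h = 1/4 + ε/4 := ⟨_, rfl⟩
  have hl : (0:ℝ) ≤ l := by rw [hl_def]; linarith
  have hh : (0:ℝ) ≤ h := by rw [hh_def]; linarith
  obtain ⟨B, hB_def⟩ : ∃ B : ℝ, B = Real.sqrt (h * l) - l := ⟨_, rfl⟩
  have key : ∀ y : Fin 4, Real.sqrt (rf ε c y * rf ε c' y)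
      = l + ((if y = c then B else 0) + (if y = c' then B else 0)) := by
    intro y
    by_cases hc : y = c
    · have hc' : y ≠ c' := fun hy => hcc (hc ▸ hy ▸ rfl)
      rw [if_pos hc, if_neg hc']
      unfold rf
      rw [if_pos hc, if_neg hc', ← hh_def, ← hl_def, hB_def]; ring
    · rw [if_neg hc]
      by_cases hc' : y = c'
      · rw [if_pos hc']
        unfold rf
        rw [if_neg hc, if_pos hc', ← hh_def, ← hl_def, hB_def, mul_comm]; ring
      · rw [if_neg hc']
        unfold rf
        rw [if_neg hc, if_neg hc', ← hl_def, Real.sqrt_mul_self hl]; ring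
  rw [Finset.sum_congr rfl fun y _ => key y, Finset.sum_add_distrib, Finset.sum_add_distrib,
    Finset.sum_const, Finset.sum_ite_eq' Finset.univ c fun _ => B,
    Finset.sum_ite_eq' Finset.univ c' fun _ => B]
  simp only [Finset.mem_univ, if_pos, Finset.card_univ, Fintype.card_fin]
  have hS : 1/4 + ε/12 - ε^2/6 ≤ Real.sqrt (h * l) := by
    have ha : (0:ℝ) ≤ 1/4 + ε/12 - ε^2/6 := by nlinarith
    rw [Real.le_sqrt ha (mul_nonneg hh hl), hh_def, hl_def]
    nlinarith
  have : (4:ℕ) • l + (B + B) = 4*l + 2*B := by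
    push_cast [nsmul_eq_mul]; ring
  rw [this]
  linarith [hS, hB_def, hl_def]

private lemma psd_real_smul {M : Matrix (Fin 2) (Fin 2) ℂ} (hM : M.PosSemidef)
    {c : ℝ} (hc : 0 ≤ c) : ((c : ℂ) • M).PosSemidef := by
  constructor
  · have : ((c : ℂ) • M).conjTranspose = (starRingEnd ℂ) (c : ℂ) • M.conjTranspose :=
      Matrix.conjTranspose_smul _ _
    unfold Matrix.IsHermitian
    rw [this, hM.1.eq, Complex.conj_ofReal]
  · intro x
    have hc' : (0:ℂ) ≤ (c:ℂ) := by exact_mod_cast hc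
    convert mul_nonneg hc' (hM.2 x) using 1
    simp only [Finsupp.sum, Finset.mul_sum, Matrix.smul_apply, smul_eq_mul]
    exact Finset.sum_congr rfl fun i _ => Finset.sum_congr rfl fun j _ => by ring

private noncomputable def rho (E : Fin 4 → Matrix (Fin 2) (Fin 2) ℂ) (ε : ℝ) (c : Fin 4) :
    Matrix (Fin 2) (Fin 2) ℂ :=
  (((1 - ε)/2 : ℝ) : ℂ) • 1 + ((ε : ℝ) : ℂ) • E c

private lemma rho_psd (E : Fin 4 → Matrix (Fin 2) (Fin 2) ℂ)
    (hEpsd : ∀ x, (E x).PosSemidef) (ε : ℝ) (hε0 : 0 ≤ ε) (hε1 : ε ≤ 1) (c : Fin 4) :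
    (rho E ε c).PosSemidef :=
  (psd_real_smul Matrix.PosSemidef.one (by linarith)).add (psd_real_smul (hEpsd c) hε0)

private lemma rho_trace (E : Fin 4 → Matrix (Fin 2) (Fin 2) ℂ)
    (hEtr : ∀ x, (E x).trace = 1) (ε : ℝ) (c : Fin 4) :
    (rho E ε c).trace = 1 := by
  unfold rho
  rw [Matrix.trace_add, Matrix.trace_smul, Matrix.trace_smul, Matrix.trace_one, hEtr]
  push_cast
  simp

private lemma trace_formula (E : Fin 4 → Matrix (Fin 2) (Fin 2) ℂ)
    (hEtr : ∀ x, (E x).trace = 1)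
    (hEip : ∀ i j, (E i * E j).trace = (2 * (if i = j then 1 else 0) + 1) / 3)
    (ε : ℝ) (c x : Fin 4) :
    ((((1 : ℂ)/2) • E x) * rho E ε c).trace
      = ((rf ε c x : ℝ) : ℂ) := by
  unfold rho
  rw [Matrix.smul_mul, Matrix.mul_add, mul_smul_comm, mul_smul_comm, Matrix.mul_one,
    Matrix.trace_smul, Matrix.trace_add, Matrix.trace_smul, Matrix.trace_smul,
    hEtr, hEip]
  unfold rf
  by_cases h : x = c
  · rw [if_pos h, if_pos h]
    simp only [smul_eq_mul]
    push_cast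
    ring
  · rw [if_neg h, if_neg h]
    simp only [smul_eq_mul]
    push_cast
    ring

private noncomputable def Pw (π : (t : ℕ) → (Fin t → Fin 4 × Fin 4) → Fin 4 → ℝ)
    (rr : Fin 4 → ℝ) (N : ℕ) (traj : Fin N → Fin 4 × Fin 4) : ℝ :=
  ∏ s : Fin N, π (s : ℕ) (fun r : Fin (s : ℕ) => traj ⟨(r : ℕ), r.2.trans s.2⟩) (traj s).1 *
    rr ((Equiv.swap 1 (traj s).1) (traj s).2)

variable {π : (t : ℕ) → (Fin t → Fin 4 × Fin 4) → Fin 4 → ℝ}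

private lemma Pw_nonneg (hπnonneg : ∀ t h a, 0 ≤ π t h a) {rr : Fin 4 → ℝ}
    (hrr : ∀ y, 0 ≤ rr y) (N : ℕ) (traj : Fin N → Fin 4 × Fin 4) :
    0 ≤ Pw π rr N traj :=
  Finset.prod_nonneg fun _ _ => mul_nonneg (hπnonneg _ _ _) (hrr _)

private lemma Pw_sum_one (hπsum : ∀ t h, ∑ a, π t h a = 1) {rr : Fin 4 → ℝ}
    (hrr : ∑ y, rr y = 1) (N : ℕ) :
    ∑ traj : Fin N → Fin 4 × Fin 4, Pw π rr N traj = 1 := by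
  refine traj_sum_eq_one N
    (fun t h p => π t h p.1 * rr ((Equiv.swap 1 p.1) p.2)) ?_
  intro t h
  rw [Fintype.sum_prod_type]
  have hx : ∀ x : Fin 4, ∑ o : Fin 4, π t h x * rr ((Equiv.swap 1 x) o) = π t h x := by
    intro x
    rw [← Finset.mul_sum, Equiv.sum_comp (Equiv.swap 1 x) rr, hrr, mul_one]
  rw [Finset.sum_congr rfl fun x _ => hx x, hπsum]

private lemma Pw_bc (hπnonneg : ∀ t h a, 0 ≤ π t h a) (hπsum : ∀ t h, ∑ a, π t h a = 1)
    {rr1 rr2 : Fin 4 → ℝ} (h1 : ∀ y, 0 ≤ rr1 y) (h2 : ∀ y, 0 ≤ rr2 y)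
    {c0 : ℝ} (hc0 : 0 ≤ c0) (hstep : c0 ≤ ∑ y, Real.sqrt (rr1 y * rr2 y)) (N : ℕ) :
    c0 ^ N ≤ ∑ traj : Fin N → Fin 4 × Fin 4,
      Real.sqrt (Pw π rr1 N traj * Pw π rr2 N traj) := by
  have hkey : ∀ traj : Fin N → Fin 4 × Fin 4,
      Real.sqrt (Pw π rr1 N traj * Pw π rr2 N traj)
      = ∏ s : Fin N,
          π (s : ℕ) (fun r : Fin (s : ℕ) => traj ⟨(r : ℕ), r.2.trans s.2⟩) (traj s).1 *
            Real.sqrt (rr1 ((Equiv.swap 1 (traj s).1) (traj s).2) *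
              rr2 ((Equiv.swap 1 (traj s).1) (traj s).2)) := by
    intro traj
    unfold Pw
    rw [← Finset.prod_mul_distrib]
    have hfac : ∀ s : Fin N,
        (π (s : ℕ) (fun r : Fin (s : ℕ) => traj ⟨(r : ℕ), r.2.trans s.2⟩) (traj s).1 *
            rr1 ((Equiv.swap 1 (traj s).1) (traj s).2)) *
        (π (s : ℕ) (fun r : Fin (s : ℕ) => traj ⟨(r : ℕ), r.2.trans s.2⟩) (traj s).1 *
            rr2 ((Equiv.swap 1 (traj s).1) (traj s).2))
        = (π (s : ℕ) (fun r : Fin (s : ℕ) => traj ⟨(r : ℕ), r.2.trans s.2⟩) (traj s).1 *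
            Real.sqrt (rr1 ((Equiv.swap 1 (traj s).1) (traj s).2) *
              rr2 ((Equiv.swap 1 (traj s).1) (traj s).2))) ^ 2 := by
      intro s
      rw [mul_pow, Real.sq_sqrt (mul_nonneg (h1 _) (h2 _))]
      ring
    rw [Finset.prod_congr rfl fun s _ => hfac s, Finset.prod_pow,
      Real.sqrt_sq (Finset.prod_nonneg fun s _ =>
        mul_nonneg (hπnonneg _ _ _) (Real.sqrt_nonneg _))]
  rw [Finset.sum_congr rfl fun traj _ => hkey traj]
  refine traj_sum_ge c0 hc0 N
    (fun t h p => π t h p.1 * Real.sqrt (rr1 ((Equiv.swap 1 p.1) p.2) *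
      rr2 ((Equiv.swap 1 p.1) p.2)))
    (fun t h p => mul_nonneg (hπnonneg _ _ _) (Real.sqrt_nonneg _)) ?_
  intro t h
  rw [Fintype.sum_prod_type]
  have hx : ∀ x : Fin 4, ∑ o : Fin 4,
      π t h x * Real.sqrt (rr1 ((Equiv.swap 1 x) o) * rr2 ((Equiv.swap 1 x) o))
      = π t h x * ∑ y, Real.sqrt (rr1 y * rr2 y) := by
    intro x
    rw [← Finset.mul_sum,
      Equiv.sum_comp (Equiv.swap 1 x) (fun y => Real.sqrt (rr1 y * rr2 y))]
  rw [Finset.sum_congr rfl fun x _ => hx x, ← Finset.sum_mul, hπsum, one_mul]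
  exact hstep

private noncomputable def vv (π : (t : ℕ) → (Fin t → Fin 4 × Fin 4) → Fin 4 → ℝ)
    (rr : Fin 4 → ℝ) (N : ℕ) (a : Fin 4) (t : Fin N) : ℝ :=
  ∑ traj : Fin N → Fin 4 × Fin 4,
    Pw π rr N traj * (if (traj t).1 = a then 1 else 0)

private lemma vv_sum_arms (hπsum : ∀ t h, ∑ a, π t h a = 1) {rr : Fin 4 → ℝ}
    (hrr : ∑ y, rr y = 1) (N : ℕ) (t : Fin N) :
    ∑ a, vv π rr N a t = 1 := by
  unfold vv
  rw [Finset.sum_comm]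
  have hτ : ∀ traj : Fin N → Fin 4 × Fin 4,
      ∑ a, Pw π rr N traj * (if (traj t).1 = a then 1 else 0) = Pw π rr N traj := by
    intro traj
    rw [← Finset.mul_sum, Finset.sum_ite_eq Finset.univ ((traj t).1) fun _ => (1:ℝ)]
    simp
  rw [Finset.sum_congr rfl fun traj _ => hτ traj, Pw_sum_one hπsum hrr]

private lemma vv_nonneg (hπnonneg : ∀ t h a, 0 ≤ π t h a) {rr : Fin 4 → ℝ}
    (hrr : ∀ y, 0 ≤ rr y) (N : ℕ) (a : Fin 4) (t : Fin N) : 0 ≤ vv π rr N a t :=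
  Finset.sum_nonneg fun traj _ => mul_nonneg (Pw_nonneg hπnonneg hrr N traj)
    (by split <;> norm_num)

private lemma vv_shift (hπnonneg : ∀ t h a, 0 ≤ π t h a) (hπsum : ∀ t h, ∑ a, π t h a = 1)
    {rr1 rr2 : Fin 4 → ℝ} (h1 : ∑ y, rr1 y = 1) (h2 : ∑ y, rr2 y = 1)
    (N : ℕ) (a : Fin 4) (t : Fin N) :
    vv π rr2 N a t ≤ vv π rr1 N a t +
      (1/2) * ∑ traj : Fin N → Fin 4 × Fin 4, |Pw π rr1 N traj - Pw π rr2 N traj| := by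
  have hpt : ∀ traj : Fin N → Fin 4 × Fin 4,
      Pw π rr2 N traj * (if (traj t).1 = a then 1 else 0)
      = Pw π rr1 N traj * (if (traj t).1 = a then 1 else 0) +
        ((Pw π rr2 N traj - Pw π rr1 N traj) * ((if (traj t).1 = a then 1 else 0) - 1/2)
          + (1/2) * Pw π rr2 N traj - (1/2) * Pw π rr1 N traj) := by
    intro traj; ring
  have hbd : ∀ traj : Fin N → Fin 4 × Fin 4,
      (Pw π rr2 N traj - Pw π rr1 N traj) * ((if (traj t).1 = a then 1 else 0) - 1/2)
        ≤ (1/2) * |Pw π rr1 N traj - Pw π rr2 N traj| := by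
    intro traj
    refine le_trans (le_abs_self _) ?_
    rw [abs_mul, abs_sub_comm]
    have : |(if (traj t).1 = a then (1:ℝ) else 0) - 1/2| ≤ 1/2 := by
      split <;> rw [abs_le] <;> constructor <;> norm_num
    calc |Pw π rr1 N traj - Pw π rr2 N traj| * |(if (traj t).1 = a then (1:ℝ) else 0) - 1/2|
        ≤ |Pw π rr1 N traj - Pw π rr2 N traj| * (1/2) :=
          mul_le_mul_of_nonneg_left this (abs_nonneg _)
      _ = (1/2) * |Pw π rr1 N traj - Pw π rr2 N traj| := by ring
  unfold vv
  rw [Finset.sum_congr rfl fun traj _ => hpt traj, Finset.sum_add_distrib]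
  have hmass : ∑ traj : Fin N → Fin 4 × Fin 4,
      ((Pw π rr2 N traj - Pw π rr1 N traj) * ((if (traj t).1 = a then 1 else 0) - 1/2)
        + (1/2) * Pw π rr2 N traj - (1/2) * Pw π rr1 N traj)
      ≤ (1/2) * ∑ traj : Fin N → Fin 4 × Fin 4, |Pw π rr1 N traj - Pw π rr2 N traj| := by
    have e1 : ∑ traj : Fin N → Fin 4 × Fin 4,
        ((Pw π rr2 N traj - Pw π rr1 N traj) * ((if (traj t).1 = a then 1 else 0) - 1/2)
          + (1/2) * Pw π rr2 N traj - (1/2) * Pw π rr1 N traj)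
        = (∑ traj : Fin N → Fin 4 × Fin 4,
            (Pw π rr2 N traj - Pw π rr1 N traj) * ((if (traj t).1 = a then 1 else 0) - 1/2))
          + (1/2) * (∑ traj : Fin N → Fin 4 × Fin 4, Pw π rr2 N traj)
          - (1/2) * (∑ traj : Fin N → Fin 4 × Fin 4, Pw π rr1 N traj) := by
      rw [Finset.sum_sub_distrib, Finset.sum_add_distrib, ← Finset.mul_sum, ← Finset.mul_sum]
    rw [e1, Pw_sum_one hπsum h1, Pw_sum_one hπsum h2]
    have := Finset.sum_le_sum fun traj (_ : traj ∈ Finset.univ) => hbd traj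
    rw [← Finset.mul_sum] at this
    linarith
  linarith [hmass]


set_option maxHeartbeats 2000000 in
/-- **Multi-armed quantum bandit lower bound with SIC-POVM measurements**
(paper's Proposition 7.1).  Let `E : Fin 4 → M₂` be a qubit SIC family with effects
`M x = (1/2) E x` and let `N ≥ 14`.  An adaptive policy assigns to every round
`t ∈ {1,…,N}` and history `h ∈ (Fin 4 × Fin 4)^{t-1}` a probability mass function over
actions.  Interacting with an environment state `ρ`, the policy induces a distribution
over trajectories in `(Fin 4 × Fin 4)^N`, with outcome probabilities
`Pr(o | a) = Tr(M (σ_a o) ρ)` where `σ_a` is the transposition swapping `1` and `a`.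
The expected reward of action `a` is `Tr(M a ρ)` and the regret is
`Σ_t (max_a Tr(M a ρ) - E[Tr(M (A_t) ρ)])`.  Then for every adaptive policy there is a
density matrix `ρ` with `Regret(N, ρ, π) ≥ (1/(8 e √24)) √N`. -/
theorem stmt5
    (E : Fin 4 → Matrix (Fin 2) (Fin 2) ℂ)
    (hEpsd : ∀ x, (E x).PosSemidef)
    (hEtr : ∀ x, (E x).trace = 1)
    (hEip : ∀ i j, (E i * E j).trace = (2 * (if i = j then 1 else 0) + 1) / 3)
    (hEsum : ∑ x, E x = (2 : ℂ) • (1 : Matrix (Fin 2) (Fin 2) ℂ))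
    (N : ℕ) (hN : 14 ≤ N)
    (π : (t : ℕ) → (Fin t → Fin 4 × Fin 4) → Fin 4 → ℝ)
    (hπnonneg : ∀ t h a, 0 ≤ π t h a)
    (hπsum : ∀ t h, ∑ a, π t h a = 1) :
    ∃ ρ : Matrix (Fin 2) (Fin 2) ℂ, ρ.PosSemidef ∧ ρ.trace = 1 ∧
      (1 / (8 * Real.exp 1 * Real.sqrt 24)) * Real.sqrt N ≤
        ∑ t : Fin N,
          ((Finset.univ.sup' Finset.univ_nonempty fun a : Fin 4 =>
              (((((1 : ℂ) / 2) • E a) * ρ).trace).re)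
            - ∑ traj : Fin N → Fin 4 × Fin 4,
                (∏ s : Fin N,
                    π s (fun r : Fin (s : ℕ) => traj ⟨(r : ℕ), r.2.trans s.2⟩) (traj s).1 *
                      ((((((1 : ℂ) / 2) • E ((Equiv.swap 1 (traj s).1) (traj s).2)) * ρ).trace).re))
                  * ((((((1 : ℂ) / 2) • E (traj t).1) * ρ).trace).re)) := by
  
  -- basic numerics
  have hN0 : (0:ℝ) < N := by
    have : (14:ℝ) ≤ N := by exact_mod_cast hN
    linarith
  have hNR : Real.sqrt N * Real.sqrt N = N := Real.mul_self_sqrt hN0.le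
  have hs0 : 0 < Real.sqrt N := Real.sqrt_pos.mpr hN0
  have hN14 : (14:ℝ) ≤ (N:ℝ) := by exact_mod_cast hN
  have hs1 : (1:ℝ) ≤ Real.sqrt N := by
    rw [show (1:ℝ) = Real.sqrt 1 by simp]
    exact Real.sqrt_le_sqrt (by linarith)
  obtain ⟨ε, hε_def⟩ : ∃ ε : ℝ, ε = 1/(2*Real.sqrt N) := ⟨_, rfl⟩
  have hε0 : 0 < ε := by rw [hε_def]; positivity
  have hε12 : ε ≤ 1/2 := by
    rw [hε_def]
    rw [div_le_div_iff₀ (by linarith) (by norm_num)]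
    linarith
  have hεN : ε * N = Real.sqrt N / 2 := by
    rw [hε_def]
    field_simp
    nlinarith [hNR]
  have hε2N : (N:ℝ) * ε^2 = 1/4 := by
    rw [hε_def]
    field_simp
    nlinarith [hNR]
  -- the constant is small
  have hconst : 1/(8 * Real.exp 1 * Real.sqrt 24) ≤ 73/1728 := by
    have he : (2.7:ℝ) ≤ Real.exp 1 := by
      have := Real.exp_one_gt_d9
      linarith
    have h24 : (4:ℝ) ≤ Real.sqrt 24 := by
      rw [Real.le_sqrt (by norm_num) (by norm_num)]
      norm_num
    have hpos : (0:ℝ) < 8 * Real.exp 1 * Real.sqrt 24 := by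
      have := Real.exp_pos 1
      nlinarith
    rw [div_le_div_iff₀ hpos (by norm_num)]
    nlinarith
  -- regret identity
  have regret_eq : ∀ c : Fin 4,
      (∑ t : Fin N,
          ((Finset.univ.sup' Finset.univ_nonempty fun a : Fin 4 =>
              (((((1 : ℂ) / 2) • E a) *
                rho E ε c).trace).re)
            - ∑ traj : Fin N → Fin 4 × Fin 4,
                (∏ s : Fin N,
                    π s (fun r : Fin (s : ℕ) => traj ⟨(r : ℕ), r.2.trans s.2⟩) (traj s).1 *
                      ((((((1 : ℂ) / 2) • E ((Equiv.swap 1 (traj s).1) (traj s).2)) *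
                        rho E ε c).trace).re))
                  * ((((((1 : ℂ) / 2) • E (traj t).1) *
                        rho E ε c).trace).re)))
      = (ε/3) * ((N:ℝ) - ∑ t : Fin N, vv π (rf ε c) N c t) := by
    intro c
    simp only [trace_formula E hEtr hEip ε c, Complex.ofReal_re]
    have hsup : (Finset.univ.sup' Finset.univ_nonempty fun a : Fin 4 => rf ε c a)
        = 1/4 + ε/4 := by
      apply le_antisymm
      · refine Finset.sup'_le _ _ fun a _ => ?_
        unfold rf; split <;> linarith
      · have h := Finset.le_sup' (fun a : Fin 4 => rf ε c a) (Finset.mem_univ c)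
        refine le_trans (le_of_eq ?_) h
        simp [rf]
    have inner_eq : ∀ t : Fin N,
        (∑ traj : Fin N → Fin 4 × Fin 4,
            (∏ s : Fin N,
                π s (fun r : Fin (s : ℕ) => traj ⟨(r : ℕ), r.2.trans s.2⟩) (traj s).1 *
                  rf ε c ((Equiv.swap 1 (traj s).1) (traj s).2))
              * rf ε c (traj t).1)
        = (1/4 - ε/12) + (ε/3) * vv π (rf ε c) N c t := by
      intro t
      show (∑ traj : Fin N → Fin 4 × Fin 4,
          Pw π (rf ε c) N traj * rf ε c (traj t).1) = _
      have hpt : ∀ traj : Fin N → Fin 4 × Fin 4,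
          Pw π (rf ε c) N traj * rf ε c (traj t).1
          = (1/4 - ε/12) * Pw π (rf ε c) N traj
            + (ε/3) * (Pw π (rf ε c) N traj * (if (traj t).1 = c then 1 else 0)) := by
        intro traj
        rw [rf_decomp ε c ((traj t).1)]
        ring
      rw [Finset.sum_congr rfl fun traj _ => hpt traj, Finset.sum_add_distrib,
        ← Finset.mul_sum, ← Finset.mul_sum, Pw_sum_one hπsum (rf_sum ε c), mul_one]
      rfl
    rw [Finset.sum_congr rfl fun t _ => by rw [hsup, inner_eq t]]
    have : ∀ t : Fin N, (1/4 + ε/4 : ℝ) - ((1/4 - ε/12) + (ε/3) * vv π (rf ε c) N c t)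
        = (ε/3) * (1 - vv π (rf ε c) N c t) := by intro t; ring
    rw [Finset.sum_congr rfl fun t _ => this t, ← Finset.mul_sum, Finset.sum_sub_distrib,
      Finset.sum_const, Finset.card_univ, Fintype.card_fin, nsmul_eq_mul, mul_one]
  -- TV bound between base arm 1 and arm a
  have hTV : ∀ a : Fin 4, a ≠ 1 →
      (1/2) * ∑ τ : Fin N → Fin 4 × Fin 4,
        |Pw π (rf ε 1) N τ - Pw π (rf ε a) N τ| ≤ 167/288 := by
    intro a ha
    have hrfnn1 := rf_nonneg hε0.le hε12 1
    have hrfnna := rf_nonneg hε0.le hε12 a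
    have hc0 : (0:ℝ) ≤ 1 - ε^2/3 := by nlinarith
    have hBCpow := Pw_bc (π := π) hπnonneg hπsum hrfnn1 hrfnna hc0
      (bhatt_step hε0.le hε12 (Ne.symm ha)) N
    have hpow : (11/12 : ℝ) ≤ (1 - ε^2/3)^N := by
      have hb := one_add_mul_le_pow (a := -(ε^2/3)) (by nlinarith) N
      rw [show (1:ℝ) + -(ε^2/3) = 1 - ε^2/3 by ring] at hb
      have h12 : (N:ℝ) * (ε^2/3) = 1/12 := by
        have e : (N:ℝ) * (ε^2/3) = ((N:ℝ) * ε^2)/3 := by ring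
        rw [e, hε2N]; norm_num
      have hb2 : 1 + (N:ℝ) * -(ε^2/3) = 11/12 := by
        rw [show (N:ℝ) * -(ε^2/3) = -((N:ℝ) * (ε^2/3)) by ring, h12]; norm_num
      linarith
    have hBC : (11/12 : ℝ) ≤ ∑ τ : Fin N → Fin 4 × Fin 4,
        Real.sqrt (Pw π (rf ε 1) N τ * Pw π (rf ε a) N τ) := le_trans hpow hBCpow
    have hP1nn : ∀ τ, 0 ≤ Pw π (rf ε 1) N τ := Pw_nonneg hπnonneg hrfnn1 N
    have hP2nn : ∀ τ, 0 ≤ Pw π (rf ε a) N τ := Pw_nonneg hπnonneg hrfnna N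
    have hCS := Finset.sum_mul_sq_le_sq_mul_sq Finset.univ
      (fun τ : Fin N → Fin 4 × Fin 4 => Real.sqrt (min (Pw π (rf ε 1) N τ) (Pw π (rf ε a) N τ)))
      (fun τ : Fin N → Fin 4 × Fin 4 => Real.sqrt (max (Pw π (rf ε 1) N τ) (Pw π (rf ε a) N τ)))
    have hprod : ∀ τ : Fin N → Fin 4 × Fin 4,
        Real.sqrt (min (Pw π (rf ε 1) N τ) (Pw π (rf ε a) N τ)) *
          Real.sqrt (max (Pw π (rf ε 1) N τ) (Pw π (rf ε a) N τ))
        = Real.sqrt (Pw π (rf ε 1) N τ * Pw π (rf ε a) N τ) := by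
      intro τ
      rw [← Real.sqrt_mul (le_min (hP1nn τ) (hP2nn τ)), min_mul_max]
    have hsqmin : ∀ τ : Fin N → Fin 4 × Fin 4,
        (Real.sqrt (min (Pw π (rf ε 1) N τ) (Pw π (rf ε a) N τ)))^2
        = min (Pw π (rf ε 1) N τ) (Pw π (rf ε a) N τ) :=
      fun τ => Real.sq_sqrt (le_min (hP1nn τ) (hP2nn τ))
    have hsqmax : ∀ τ : Fin N → Fin 4 × Fin 4,
        (Real.sqrt (max (Pw π (rf ε 1) N τ) (Pw π (rf ε a) N τ)))^2
        = max (Pw π (rf ε 1) N τ) (Pw π (rf ε a) N τ) :=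
      fun τ => Real.sq_sqrt (le_trans (hP1nn τ) (le_max_left _ _))
    rw [Finset.sum_congr rfl fun τ _ => hprod τ, Finset.sum_congr rfl fun τ _ => hsqmin τ,
      Finset.sum_congr rfl fun τ _ => hsqmax τ] at hCS
    have hmass1 : ∑ τ : Fin N → Fin 4 × Fin 4, Pw π (rf ε 1) N τ = 1 :=
      Pw_sum_one hπsum (rf_sum ε 1) N
    have hmass2 : ∑ τ : Fin N → Fin 4 × Fin 4, Pw π (rf ε a) N τ = 1 :=
      Pw_sum_one hπsum (rf_sum ε a) N
    have hmaxsum : ∑ τ : Fin N → Fin 4 × Fin 4,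
        max (Pw π (rf ε 1) N τ) (Pw π (rf ε a) N τ) ≤ 2 := by
      have := Finset.sum_le_sum fun (τ : Fin N → Fin 4 × Fin 4) (_ : τ ∈ Finset.univ) =>
        max_le (le_add_of_nonneg_right (hP2nn τ)) (le_add_of_nonneg_left (hP1nn τ))
      rw [Finset.sum_add_distrib, hmass1, hmass2] at this
      linarith
    have hminnn : 0 ≤ ∑ τ : Fin N → Fin 4 × Fin 4,
        min (Pw π (rf ε 1) N τ) (Pw π (rf ε a) N τ) :=
      Finset.sum_nonneg fun τ _ => le_min (hP1nn τ) (hP2nn τ)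
    have hBC2 : (121/144 : ℝ) ≤ (∑ τ : Fin N → Fin 4 × Fin 4,
        Real.sqrt (Pw π (rf ε 1) N τ * Pw π (rf ε a) N τ))^2 := by
      calc (121/144 : ℝ) = (11/12)^2 := by norm_num
        _ ≤ _ := pow_le_pow_left₀ (by norm_num) hBC 2
    have h2min : (∑ τ : Fin N → Fin 4 × Fin 4,
          min (Pw π (rf ε 1) N τ) (Pw π (rf ε a) N τ)) *
        (∑ τ : Fin N → Fin 4 × Fin 4,
          max (Pw π (rf ε 1) N τ) (Pw π (rf ε a) N τ))
        ≤ (∑ τ : Fin N → Fin 4 × Fin 4,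
          min (Pw π (rf ε 1) N τ) (Pw π (rf ε a) N τ)) * 2 :=
      mul_le_mul_of_nonneg_left hmaxsum hminnn
    have hmin : (121/288 : ℝ) ≤ ∑ τ : Fin N → Fin 4 × Fin 4,
        min (Pw π (rf ε 1) N τ) (Pw π (rf ε a) N τ) := by
      linarith [hCS, hBC2, h2min]
    have habs : ∑ τ : Fin N → Fin 4 × Fin 4, |Pw π (rf ε 1) N τ - Pw π (rf ε a) N τ|
        = 2 - 2 * ∑ τ : Fin N → Fin 4 × Fin 4,
            min (Pw π (rf ε 1) N τ) (Pw π (rf ε a) N τ) := by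
      have hpt : ∀ τ : Fin N → Fin 4 × Fin 4,
          |Pw π (rf ε 1) N τ - Pw π (rf ε a) N τ|
          = Pw π (rf ε 1) N τ + Pw π (rf ε a) N τ
            - 2 * min (Pw π (rf ε 1) N τ) (Pw π (rf ε a) N τ) := by
        intro τ
        have h1 := max_add_min (Pw π (rf ε 1) N τ) (Pw π (rf ε a) N τ)
        have h2 := max_sub_min_eq_abs (Pw π (rf ε 1) N τ) (Pw π (rf ε a) N τ)
        rw [abs_sub_comm] at h2
        linarith
      rw [Finset.sum_congr rfl fun τ _ => hpt τ, Finset.sum_sub_distrib,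
        Finset.sum_add_distrib, hmass1, hmass2, ← Finset.mul_sum]
      norm_num
    rw [habs]
    linarith
  -- case analysis
  by_cases hcase : (∑ t : Fin N, vv π (rf ε 1) N 1 t) ≤ (N:ℝ)/2
  · refine ⟨rho E ε 1, rho_psd E hEpsd ε hε0.le (by linarith) 1, rho_trace E hEtr ε 1, ?_⟩
    refine le_of_le_of_eq ?_ (regret_eq 1).symm
    calc (1 / (8 * Real.exp 1 * Real.sqrt 24)) * Real.sqrt N
        ≤ (73/1728) * Real.sqrt N := mul_le_mul_of_nonneg_right hconst hs0.le
      _ ≤ Real.sqrt N / 12 := by linarith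
      _ = (ε/3) * ((N:ℝ)/2) := by
          have e : (ε/3) * ((N:ℝ)/2) = (ε*(N:ℝ))/6 := by ring
          rw [e, hεN]; ring
      _ ≤ (ε/3) * ((N:ℝ) - ∑ t : Fin N, vv π (rf ε 1) N 1 t) := by
          refine mul_le_mul_of_nonneg_left ?_ (by positivity)
          linarith
  · push_neg at hcase
    obtain ⟨a, haerase, hXa⟩ : ∃ a ∈ Finset.univ.erase (1 : Fin 4),
        (∑ t : Fin N, vv π (rf ε 1) N a t) ≤ (N:ℝ)/6 := by
      by_contra hno
      push_neg at hno
      have hne : (Finset.univ.erase (1 : Fin 4)).Nonempty :=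
        ⟨0, Finset.mem_erase.mpr ⟨by decide, Finset.mem_univ _⟩⟩
      have hlt := Finset.sum_lt_sum_of_nonempty hne fun a ha => hno a ha
      have hcard : (Finset.univ.erase (1 : Fin 4)).card = 3 := by
        rw [Finset.card_erase_of_mem (Finset.mem_univ _), Finset.card_univ, Fintype.card_fin]
      have hsum_eq : ∑ a ∈ Finset.univ.erase (1:Fin 4), (∑ t : Fin N, vv π (rf ε 1) N a t)
          = (N:ℝ) - ∑ t : Fin N, vv π (rf ε 1) N 1 t := by
        rw [Finset.sum_comm]
        have hper : ∀ t : Fin N, ∑ a ∈ Finset.univ.erase (1:Fin 4), vv π (rf ε 1) N a t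
            = 1 - vv π (rf ε 1) N 1 t := by
          intro t
          have h := Finset.sum_erase_add Finset.univ (fun a => vv π (rf ε 1) N a t)
            (Finset.mem_univ (1:Fin 4))
          rw [vv_sum_arms hπsum (rf_sum ε 1) N t] at h
          linarith
        rw [Finset.sum_congr rfl fun t _ => hper t, Finset.sum_sub_distrib, Finset.sum_const,
          Finset.card_univ, Fintype.card_fin, nsmul_eq_mul, mul_one]
      rw [hsum_eq, Finset.sum_const, hcard] at hlt
      rw [nsmul_eq_mul] at hlt
      push_cast at hlt
      linarith
    have ha1 : a ≠ 1 := (Finset.mem_erase.mp haerase).1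
    refine ⟨rho E ε a, rho_psd E hEpsd ε hε0.le (by linarith) a, rho_trace E hEtr ε a, ?_⟩
    refine le_of_le_of_eq ?_ (regret_eq a).symm
    have hVa : (∑ t : Fin N, vv π (rf ε a) N a t) ≤ (N:ℝ)/6 + (N:ℝ) * (167/288) := by
      have hshift : ∀ t : Fin N, vv π (rf ε a) N a t ≤ vv π (rf ε 1) N a t + 167/288 := by
        intro t
        refine le_trans (vv_shift hπnonneg hπsum (rf_sum ε 1) (rf_sum ε a) N a t) ?_
        linarith [hTV a ha1]
      calc ∑ t : Fin N, vv π (rf ε a) N a t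
          ≤ ∑ t : Fin N, (vv π (rf ε 1) N a t + 167/288) :=
            Finset.sum_le_sum fun t _ => hshift t
        _ = (∑ t : Fin N, vv π (rf ε 1) N a t) + (N:ℝ)*(167/288) := by
            rw [Finset.sum_add_distrib, Finset.sum_const, Finset.card_univ, Fintype.card_fin,
              nsmul_eq_mul]
        _ ≤ (N:ℝ)/6 + (N:ℝ)*(167/288) := by linarith
    calc (1 / (8 * Real.exp 1 * Real.sqrt 24)) * Real.sqrt N
        ≤ (73/1728) * Real.sqrt N := mul_le_mul_of_nonneg_right hconst hs0.le
      _ = (ε/3) * ((73/288) * (N:ℝ)) := by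
          have e : (ε/3) * ((73/288) * (N:ℝ)) = (73/864)*(ε*(N:ℝ)) := by ring
          rw [e, hεN]; ring
      _ ≤ (ε/3) * ((N:ℝ) - ∑ t : Fin N, vv π (rf ε a) N a t) := by
          refine mul_le_mul_of_nonneg_left ?_ (by positivity)
          linarith
end

section
/- Let S ≥ 1 and let {P_μ}_{μ ∈ Fin(S²)} be a family of Hermitian S×S complex matrices that is orthonormal with respect to the Hilbert–Schmidt inner product, i.e. Tr(P_μ·P_ν) = δ_{μν} for all μ, ν. Then for every positive semidefinite S×S complex matrix M, Σ_{μ ∈ Fin(S²)} |Tr(P_μ·M)| ≤ S·Tr(M). -/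
open Matrix BigOperators ComplexOrder

private def matToEuc {S : ℕ} (A : Matrix (Fin S) (Fin S) ℂ) :
    EuclideanSpace ℂ (Fin S × Fin S) := WithLp.toLp 2 (fun p : Fin S × Fin S => A p.1 p.2)

private lemma inner_matToEuc {S : ℕ} (A B : Matrix (Fin S) (Fin S) ℂ) :
    (inner ℂ (matToEuc A) (matToEuc B) : ℂ) = (Aᴴ * B).trace := by
  simp only [PiLp.inner_apply, RCLike.inner_apply, matToEuc, PiLp.toLp_apply, Matrix.trace,
    Matrix.diag, Matrix.mul_apply, Matrix.conjTranspose_apply]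
  rw [Fintype.sum_prod_type, Finset.sum_comm]
  simp [mul_comm]

/-- For a PSD matrix, `Tr(M*M).re ≤ (Tr M).re ^ 2`. -/
private lemma trace_sq_le {S : ℕ} {M : Matrix (Fin S) (Fin S) ℂ}
    (hM : M.PosSemidef) : ((M * M).trace).re ≤ ((M.trace).re) ^ 2 := by
  classical
  have hH := hM.1
  set U : Matrix (Fin S) (Fin S) ℂ := (hH.eigenvectorUnitary : Matrix (Fin S) (Fin S) ℂ)
  set D : Matrix (Fin S) (Fin S) ℂ :=
    Matrix.diagonal (RCLike.ofReal ∘ hH.eigenvalues)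
  have hU : star U * U = 1 := (Matrix.mem_unitaryGroup_iff').mp hH.eigenvectorUnitary.2
  have hspec : M = U * D * star U := hH.spectral_theorem
  have htr : M.trace = D.trace := by
    rw [hspec, Matrix.trace_mul_cycle, hU, one_mul]
  have htr2 : (M * M).trace = (D * D).trace := by
    have hMM : M * M = U * (D * D) * star U := by
      rw [hspec]
      simp only [mul_assoc]
      rw [← mul_assoc (star U) U, hU, one_mul]
    rw [hMM, Matrix.trace_mul_cycle, hU, one_mul]
  have hDD : (D * D).trace = ∑ i, ((hH.eigenvalues i : ℂ) * (hH.eigenvalues i : ℂ)) := by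
    simp [D, Matrix.diagonal_mul_diagonal, Matrix.trace_diagonal]
  have hD : D.trace = ∑ i, (hH.eigenvalues i : ℂ) := by
    simp [D, Matrix.trace_diagonal]
  rw [htr, htr2, hDD, hD]
  have h1 : ((∑ i, ((hH.eigenvalues i : ℂ) * (hH.eigenvalues i : ℂ))).re)
      = ∑ i, (hH.eigenvalues i) ^ 2 := by
    push_cast [Complex.re_sum]
    simp [sq]
  have h2 : ((∑ i, (hH.eigenvalues i : ℂ)).re) = ∑ i, hH.eigenvalues i := by
    push_cast [Complex.re_sum]
    simp
  rw [h1, h2]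
  exact Finset.sum_sq_le_sq_sum_of_nonneg fun i _ => hM.eigenvalues_nonneg i

/-- **Universal basis coefficient bound** (paper's Lemma 6.1).
Let `S ≥ 1` and let `{P μ}` (indexed by `Fin (S^2)`) be a family of Hermitian `S×S` complex
matrices, orthonormal with respect to the Hilbert–Schmidt inner product, i.e.
`Tr(P μ * P ν) = δ_{μν}`.  Then for every positive semidefinite `S×S` matrix `M`,
`Σ_μ |Tr(P μ * M)| ≤ S * Tr(M)`. -/
theorem stmt6 {S : ℕ} (hS : 1 ≤ S)
    (P : Fin (S ^ 2) → Matrix (Fin S) (Fin S) ℂ)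
    (hHerm : ∀ μ, (P μ).IsHermitian)
    (hON : ∀ μ ν, (P μ * P ν).trace = if μ = ν then 1 else 0)
    (M : Matrix (Fin S) (Fin S) ℂ) (hM : M.PosSemidef) :
    ∑ μ, ‖(P μ * M).trace‖ ≤ (S : ℝ) * M.trace.re := by
  classical
  set v : Fin (S ^ 2) → EuclideanSpace ℂ (Fin S × Fin S) := fun μ => matToEuc (P μ)
  have hvON : Orthonormal ℂ v := by
    rw [orthonormal_iff_ite]
    intro μ ν
    rw [inner_matToEuc, (hHerm μ).eq, hON]
  -- Bessel's inequality
  have hBessel : ∑ μ, ‖(inner ℂ (v μ) (matToEuc M) : ℂ)‖ ^ 2 ≤ ‖matToEuc M‖ ^ 2 :=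
    hvON.sum_inner_products_le (matToEuc M)
  have hinner : ∀ μ, (inner ℂ (v μ) (matToEuc M) : ℂ) = ((P μ) * M).trace := by
    intro μ
    rw [inner_matToEuc, (hHerm μ).eq]
  have hnormsq : ‖matToEuc M‖ ^ 2 = ((M * M).trace).re := by
    rw [@norm_sq_eq_re_inner ℂ, inner_matToEuc, hM.1.eq]; rfl
  have hb : ∑ μ, ‖((P μ) * M).trace‖ ^ 2 ≤ (M.trace.re) ^ 2 := by
    calc ∑ μ, ‖((P μ) * M).trace‖ ^ 2
        = ∑ μ, ‖(inner ℂ (v μ) (matToEuc M) : ℂ)‖ ^ 2 := by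
          refine Finset.sum_congr rfl fun μ _ => ?_
          rw [hinner μ]
      _ ≤ ‖matToEuc M‖ ^ 2 := hBessel
      _ = ((M * M).trace).re := hnormsq
      _ ≤ (M.trace.re) ^ 2 := trace_sq_le hM
  -- Cauchy–Schwarz
  have hCS : (∑ μ, ‖((P μ) * M).trace‖) ^ 2
      ≤ (S ^ 2 : ℝ) * ∑ μ, ‖((P μ) * M).trace‖ ^ 2 := by
    have := sq_sum_le_card_mul_sum_sq (s := (Finset.univ : Finset (Fin (S ^ 2))))
      (f := fun μ => ‖((P μ) * M).trace‖)
    simpa using this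
  have htrnn : 0 ≤ M.trace.re := by
    rw [Matrix.trace, Complex.re_sum]
    refine Finset.sum_nonneg fun i _ => ?_
    have h := hM.diag_nonneg (i := i)
    rw [Complex.le_def] at h
    simpa [Matrix.diag] using h.1
  have hsq : (∑ μ, ‖((P μ) * M).trace‖) ^ 2 ≤ ((S : ℝ) * M.trace.re) ^ 2 := by
    calc (∑ μ, ‖((P μ) * M).trace‖) ^ 2
        ≤ (S ^ 2 : ℝ) * ∑ μ, ‖((P μ) * M).trace‖ ^ 2 := hCS
      _ ≤ (S ^ 2 : ℝ) * (M.trace.re) ^ 2 := by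
          apply mul_le_mul_of_nonneg_left hb (by positivity)
      _ = ((S : ℝ) * M.trace.re) ^ 2 := by ring
  have hsumnn : 0 ≤ ∑ μ, ‖((P μ) * M).trace‖ :=
    Finset.sum_nonneg fun μ _ => norm_nonneg _
  nlinarith [hsq, hsumnn, mul_nonneg (Nat.cast_nonneg (α := ℝ) S) htrnn]
end

section
/- Let E : Fin 4 → M₂ be a qubit SIC family with effects M_x := (1/2)·E_x, let Δ ∈ (0, 1/6], and let l ∈ Fin 4 with l ≠ 1. Define ρ₁ := ((1−Δ)/2)·I + Δ·E₁ and ρ_l := ((1−3Δ)/2)·I + Δ·E₁ + 2Δ·E_l, and the expected rewards μ_a(ρ) := Tr(M_a·ρ). Then: (i) ρ₁ and ρ_l are Hermitian positive semidefinite with trace one; (ii) μ₁(ρ₁) = (1+Δ)/4 and μ_a(ρ₁) = (3−Δ)/12 for every a ≠ 1, so action 1 is optimal for ρ₁ with uniform suboptimality gap μ₁(ρ₁) − μ_a(ρ₁) = Δ/3 for a ≠ 1; (iii) μ_l(ρ_l) = (3+5Δ)/12, μ₁(ρ_l) = (3+Δ)/12, and μ_a(ρ_l) = (3−3Δ)/12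 for a ∉ {1, l}, so action l is optimal for ρ_l and μ_l(ρ_l) − μ₁(ρ_l) = Δ/3. -/
open Matrix BigOperators ComplexOrder

lemma psd_add' {n : Type*} [Fintype n] {A B : Matrix n n ℂ}
    (hA : A.PosSemidef) (hB : B.PosSemidef) : (A + B).PosSemidef := by
  refine ⟨hA.1.add hB.1, fun x => ?_⟩
  simpa [mul_add, add_mul] using add_nonneg (hA.2 x) (hB.2 x)

lemma psd_smul' {n : Type*} [Fintype n] {A : Matrix n n ℂ} {c : ℝ}
    (hc : 0 ≤ c) (hA : A.PosSemidef) : ((c : ℂ) • A).PosSemidef := by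
  refine ⟨?_, fun x => ?_⟩
  · unfold Matrix.IsHermitian
    rw [conjTranspose_smul, hA.1]
    simp
  · exact (hA.smul (a := (c : ℂ)) (by exact_mod_cast hc)).2 x

/-- **Construction of the two candidate bandit environments** (Step 1 of the proof of the
paper's Proposition 7.1).  Given a qubit SIC family `E : Fin 4 → M₂` with effects
`M x = (1/2) E x`, `Δ ∈ (0, 1/6]` and `l ≠ 1`, the states
`ρ₁ = ((1-Δ)/2) I + Δ E₁` and `ρ_l = ((1-3Δ)/2) I + Δ E₁ + 2Δ E_l` are density matrices;
the expected rewards `μ_a(ρ) = Tr(M a * ρ)` satisfy `μ₁(ρ₁) = (1+Δ)/4`,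
`μ_a(ρ₁) = (3-Δ)/12` for `a ≠ 1` (so action `1` is optimal for `ρ₁` with uniform gap `Δ/3`),
and `μ_l(ρ_l) = (3+5Δ)/12`, `μ₁(ρ_l) = (3+Δ)/12`, `μ_a(ρ_l) = (3-3Δ)/12` for `a ∉ {1, l}`
(so action `l` is optimal for `ρ_l` and `μ_l(ρ_l) - μ₁(ρ_l) = Δ/3`). -/
theorem stmt13
    (E : Fin 4 → Matrix (Fin 2) (Fin 2) ℂ)
    (hEpsd : ∀ x, (E x).PosSemidef)
    (hEtr : ∀ x, (E x).trace = 1)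
    (hEip : ∀ i j, (E i * E j).trace = (2 * (if i = j then 1 else 0) + 1) / 3)
    (hEsum : ∑ x, E x = (2 : ℂ) • (1 : Matrix (Fin 2) (Fin 2) ℂ))
    (Δ : ℝ) (hΔ : 0 < Δ) (hΔ' : Δ ≤ 1 / 6) (l : Fin 4) (hl : l ≠ 1) :
    let M : Fin 4 → Matrix (Fin 2) (Fin 2) ℂ := fun x => ((1 : ℂ) / 2) • E x
    let ρ₁ : Matrix (Fin 2) (Fin 2) ℂ :=
      (((1 - Δ) / 2 : ℝ) : ℂ) • (1 : Matrix (Fin 2) (Fin 2) ℂ) + ((Δ : ℝ) : ℂ) • E 1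
    let ρl : Matrix (Fin 2) (Fin 2) ℂ :=
      (((1 - 3 * Δ) / 2 : ℝ) : ℂ) • (1 : Matrix (Fin 2) (Fin 2) ℂ)
        + ((Δ : ℝ) : ℂ) • E 1 + ((2 * Δ : ℝ) : ℂ) • E l
    -- (i) both candidates are valid density matrices
    (ρ₁.PosSemidef ∧ ρ₁.trace = 1 ∧ ρl.PosSemidef ∧ ρl.trace = 1) ∧
    -- (ii) expected rewards for ρ₁ : action 1 optimal, uniform gap Δ/3
    ((M 1 * ρ₁).trace = (((1 + Δ) / 4 : ℝ) : ℂ) ∧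
      (∀ a, a ≠ 1 → (M a * ρ₁).trace = (((3 - Δ) / 12 : ℝ) : ℂ)) ∧
      (∀ a, ((M a * ρ₁).trace).re ≤ ((M 1 * ρ₁).trace).re) ∧
      (∀ a, a ≠ 1 → (M 1 * ρ₁).trace - (M a * ρ₁).trace = ((Δ / 3 : ℝ) : ℂ))) ∧
    -- (iii) expected rewards for ρl : action l optimal, gap Δ/3 against action 1
    ((M l * ρl).trace = (((3 + 5 * Δ) / 12 : ℝ) : ℂ) ∧
      (M 1 * ρl).trace = (((3 + Δ) / 12 : ℝ) : ℂ) ∧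
      (∀ a, a ≠ 1 → a ≠ l → (M a * ρl).trace = (((3 - 3 * Δ) / 12 : ℝ) : ℂ)) ∧
      (∀ a, ((M a * ρl).trace).re ≤ ((M l * ρl).trace).re) ∧
      (M l * ρl).trace - (M 1 * ρl).trace = ((Δ / 3 : ℝ) : ℂ)) := by
  intro M ρ₁ ρl
  have tr1 : (1 : Matrix (Fin 2) (Fin 2) ℂ).trace = 2 := by
    simp [Matrix.trace_one]
  -- generic trace computations
  have h1 : ∀ a : Fin 4, (M a * ρ₁).trace
      = (1 / 2 : ℂ) * ((((1 - Δ) / 2 : ℝ) : ℂ)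
        + ((Δ : ℝ) : ℂ) * ((2 * (if a = 1 then 1 else 0) + 1) / 3)) := by
    intro a
    simp only [M, ρ₁, Matrix.smul_mul, Matrix.mul_add, Matrix.mul_smul, Matrix.mul_one,
      trace_add, trace_smul, smul_eq_mul, hEtr, hEip, tr1]
    ring
  have h2 : ∀ a : Fin 4, (M a * ρl).trace
      = (1 / 2 : ℂ) * ((((1 - 3 * Δ) / 2 : ℝ) : ℂ)
        + ((Δ : ℝ) : ℂ) * ((2 * (if a = 1 then 1 else 0) + 1) / 3)
        + ((2 * Δ : ℝ) : ℂ) * ((2 * (if a = l then 1 else 0) + 1) / 3)) := by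
    intro a
    simp only [M, ρl, Matrix.smul_mul, Matrix.mul_add, Matrix.mul_smul, Matrix.mul_one,
      trace_add, trace_smul, smul_eq_mul, hEtr, hEip, tr1]
    ring
  have hμ11 : (M 1 * ρ₁).trace = (((1 + Δ) / 4 : ℝ) : ℂ) := by
    rw [h1 1]; simp; push_cast; ring
  have hμa1 : ∀ a, a ≠ 1 → (M a * ρ₁).trace = (((3 - Δ) / 12 : ℝ) : ℂ) := by
    intro a ha
    rw [h1 a, if_neg ha]; push_cast; ring
  have hμll : (M l * ρl).trace = (((3 + 5 * Δ) / 12 : ℝ) : ℂ) := by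
    rw [h2 l, if_neg hl, if_pos rfl]; push_cast; ring
  have hμ1l : (M 1 * ρl).trace = (((3 + Δ) / 12 : ℝ) : ℂ) := by
    rw [h2 1, if_pos rfl, if_neg (Ne.symm hl)]; push_cast; ring
  have hμal : ∀ a, a ≠ 1 → a ≠ l → (M a * ρl).trace = (((3 - 3 * Δ) / 12 : ℝ) : ℂ) := by
    intro a ha hal
    rw [h2 a, if_neg ha, if_neg hal]; push_cast; ring
  refine ⟨⟨?_, ?_, ?_, ?_⟩, ⟨hμ11, hμa1, ?_, ?_⟩, ⟨hμll, hμ1l, hμal, ?_, ?_⟩⟩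
  · exact psd_add' (psd_smul' (by linarith) Matrix.PosSemidef.one)
      (psd_smul' hΔ.le (hEpsd 1))
  · simp only [ρ₁, trace_add, trace_smul, tr1, hEtr, smul_eq_mul, mul_one]
    push_cast; ring
  · exact psd_add' (psd_add' (psd_smul' (by linarith) Matrix.PosSemidef.one)
      (psd_smul' hΔ.le (hEpsd 1))) (psd_smul' (by linarith) (hEpsd l))
  · simp only [ρl, trace_add, trace_smul, tr1, hEtr, smul_eq_mul, mul_one]
    push_cast; ring
  · intro a
    by_cases ha : a = 1
    · subst ha; exact le_refl _
    · rw [hμa1 a ha, hμ11, Complex.ofReal_re, Complex.ofReal_re]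
      linarith
  · intro a ha
    rw [hμ11, hμa1 a ha]
    push_cast; ring
  · intro a
    by_cases hal : a = l
    · subst hal; exact le_refl _
    by_cases ha : a = 1
    · subst ha
      rw [hμ1l, hμll, Complex.ofReal_re, Complex.ofReal_re]
      linarith
    · rw [hμal a ha hal, hμll, Complex.ofReal_re, Complex.ofReal_re]
      linarith
  · rw [hμll, hμ1l]
    push_cast; ring
end

section
/- Let E : Fin 4 → M₂ be a qubit SIC family with effects M_x := (1/2)·E_x, let Δ ∈ (0, 1/6], and let l ∈ Fin 4 with l ≠ 1. Define ρ₁ := ((1−Δ)/2)·I + Δ·E₁ and ρ_l := ((1−3Δ)/2)·I + Δ·E₁ + 2Δ·E_l. Then: (i) Σ_{x ∈ Fin 4} (Tr(M_x·ρ₁) − Tr(M_x·ρ_l))² = Δ²/3; (ii) Tr(M_x·ρ_l) ≥ (1−3Δ)/4 > 0 for every x; and consequently (iii) the chi-squared divergence satisfies Σ_{x ∈ Fin 4} (Tr(M_x·ρ₁) − Tr(M_x·ρ_l))² / Tr(M_x·ρ_l) ≤ 8Δ²/3. -/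
open Matrix BigOperators ComplexOrder

lemma aux_tr1 (E : Fin 4 → Matrix (Fin 2) (Fin 2) ℂ)
    (hEtr : ∀ x, (E x).trace = 1)
    (hEip : ∀ i j, (E i * E j).trace = (2 * (if i = j then 1 else 0) + 1) / 3)
    (Δ : ℝ) (x : Fin 4) :
    ((((1:ℂ)/2) • E x) * ((((1 - Δ)/2 : ℝ):ℂ) • (1:Matrix (Fin 2) (Fin 2) ℂ)
        + ((Δ:ℝ):ℂ) • E 1)).trace
      = ((((1-Δ)/4 + Δ*(2*(if x = 1 then 1 else 0)+1)/6) : ℝ) : ℂ) := by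
  rw [Matrix.smul_mul, Matrix.mul_add, Matrix.mul_smul, Matrix.mul_smul, Matrix.mul_one,
    trace_smul, trace_add, trace_smul, trace_smul, hEtr, hEip]
  simp only [smul_eq_mul]
  push_cast
  split <;> push_cast <;> ring

lemma aux_trl (E : Fin 4 → Matrix (Fin 2) (Fin 2) ℂ)
    (hEtr : ∀ x, (E x).trace = 1)
    (hEip : ∀ i j, (E i * E j).trace = (2 * (if i = j then 1 else 0) + 1) / 3)
    (Δ : ℝ) (l x : Fin 4) :
    ((((1:ℂ)/2) • E x) * ((((1 - 3*Δ)/2 : ℝ):ℂ) • (1:Matrix (Fin 2) (Fin 2) ℂ)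
        + ((Δ:ℝ):ℂ) • E 1 + ((2*Δ:ℝ):ℂ) • E l)).trace
      = ((((1-3*Δ)/4 + Δ*(2*(if x = 1 then 1 else 0)+1)/6
          + Δ*(2*(if x = l then 1 else 0)+1)/3) : ℝ) : ℂ) := by
  rw [Matrix.smul_mul, Matrix.mul_add, Matrix.mul_add, Matrix.mul_smul, Matrix.mul_smul,
    Matrix.mul_smul, Matrix.mul_one, trace_smul, trace_add, trace_add, trace_smul,
    trace_smul, trace_smul, hEtr, hEip, hEip]
  simp only [smul_eq_mul]
  push_cast
  split <;> split <;> push_cast <;> ring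

/-- **Chi-squared divergence bound between the two candidate environments**
(Step 2 of the proof of the paper's Proposition 7.1).  Given a qubit SIC family
`E : Fin 4 → M₂` with effects `M x = (1/2) E x`, `Δ ∈ (0, 1/6]` and `l ≠ 1`, and the states
`ρ₁ = ((1-Δ)/2) I + Δ E₁` and `ρ_l = ((1-3Δ)/2) I + Δ E₁ + 2Δ E_l`, one has:
(i) `Σ_x (Tr(M x ρ₁) - Tr(M x ρ_l))² = Δ²/3`;
(ii) `Tr(M x ρ_l) ≥ (1-3Δ)/4 > 0` for every `x`; and consequently
(iii) `Σ_x (Tr(M x ρ₁) - Tr(M x ρ_l))² / Tr(M x ρ_l) ≤ 8Δ²/3`. -/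
theorem stmt14
    (E : Fin 4 → Matrix (Fin 2) (Fin 2) ℂ)
    (hEpsd : ∀ x, (E x).PosSemidef)
    (hEtr : ∀ x, (E x).trace = 1)
    (hEip : ∀ i j, (E i * E j).trace = (2 * (if i = j then 1 else 0) + 1) / 3)
    (hEsum : ∑ x, E x = (2 : ℂ) • (1 : Matrix (Fin 2) (Fin 2) ℂ))
    (Δ : ℝ) (hΔ : 0 < Δ) (hΔ' : Δ ≤ 1 / 6) (l : Fin 4) (hl : l ≠ 1) :
    let M : Fin 4 → Matrix (Fin 2) (Fin 2) ℂ := fun x => ((1 : ℂ) / 2) • E x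
    let ρ₁ : Matrix (Fin 2) (Fin 2) ℂ :=
      (((1 - Δ) / 2 : ℝ) : ℂ) • (1 : Matrix (Fin 2) (Fin 2) ℂ) + ((Δ : ℝ) : ℂ) • E 1
    let ρl : Matrix (Fin 2) (Fin 2) ℂ :=
      (((1 - 3 * Δ) / 2 : ℝ) : ℂ) • (1 : Matrix (Fin 2) (Fin 2) ℂ)
        + ((Δ : ℝ) : ℂ) • E 1 + ((2 * Δ : ℝ) : ℂ) • E l
    -- (i) squared ℓ2 distance between outcome distributions
    (∑ x : Fin 4, (((M x * ρ₁).trace).re - ((M x * ρl).trace).re) ^ 2 = Δ ^ 2 / 3) ∧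
    -- (ii) uniform lower bound on the outcome probabilities of ρl
    (∀ x : Fin 4, (1 - 3 * Δ) / 4 ≤ ((M x * ρl).trace).re) ∧ (0 < (1 - 3 * Δ) / 4) ∧
    -- (iii) chi-squared divergence bound
    (∑ x : Fin 4,
        (((M x * ρ₁).trace).re - ((M x * ρl).trace).re) ^ 2 / ((M x * ρl).trace).re
      ≤ 8 * Δ ^ 2 / 3) := by
  intro M ρ₁ ρl
  have h1 : ∀ x : Fin 4, ((M x * ρ₁).trace).re
      = (1-Δ)/4 + Δ*(2*(if x = 1 then 1 else 0)+1)/6 := by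
    intro x
    have := aux_tr1 E hEtr hEip Δ x
    simp only [M, ρ₁, this, Complex.ofReal_re]
  have hq : ∀ x : Fin 4, ((M x * ρl).trace).re
      = (1-3*Δ)/4 + Δ*(2*(if x = 1 then 1 else 0)+1)/6
        + Δ*(2*(if x = l then 1 else 0)+1)/3 := by
    intro x
    have := aux_trl E hEtr hEip Δ l x
    simp only [M, ρl, this, Complex.ofReal_re]
  have hc : 0 < (1 - 3 * Δ) / 4 := by nlinarith
  have hqlb : ∀ x : Fin 4, (1 - 3 * Δ) / 4 ≤ ((M x * ρl).trace).re := by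
    intro x
    rw [hq x]
    split_ifs <;> nlinarith
  have hi : ∑ x : Fin 4, (((M x * ρ₁).trace).re - ((M x * ρl).trace).re) ^ 2 = Δ ^ 2 / 3 := by
    simp only [h1, hq, Fin.sum_univ_four]
    fin_cases l <;> simp <;> ring
  refine ⟨hi, hqlb, hc, ?_⟩
  have hle : ∑ x : Fin 4,
      (((M x * ρ₁).trace).re - ((M x * ρl).trace).re) ^ 2 / ((M x * ρl).trace).re
      ≤ ∑ x : Fin 4,
        (((M x * ρ₁).trace).re - ((M x * ρl).trace).re) ^ 2 / ((1 - 3 * Δ) / 4) := by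
    apply Finset.sum_le_sum
    intro x _
    exact div_le_div_of_nonneg_left (sq_nonneg _) hc (hqlb x)
  calc _ ≤ ∑ x : Fin 4,
        (((M x * ρ₁).trace).re - ((M x * ρl).trace).re) ^ 2 / ((1 - 3 * Δ) / 4) := hle
    _ = (Δ ^ 2 / 3) / ((1 - 3 * Δ) / 4) := by rw [← Finset.sum_div, hi]
    _ ≤ 8 * Δ ^ 2 / 3 := by
        rw [div_le_iff₀ hc]
        nlinarith [sq_nonneg Δ]
end
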